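/- arXiv:1106.4983 — 6 statements merged into one kernel-verified Lean document; each statement's English description precedes it below -/
import Mathlib

section
/- Let X be a nonnegative real random variable and let ρ ∈ (0,1). Then the series of expectations satisfies ∑_{j≥1} E[log(1 + ρ^{j−1} X)] ≤ E[log(1+X)] + (1−ρ)^{−1} ∫₀¹ u^{−1} E[log(1 + uX)] du. -/
open MeasureTheory
set_option maxHeartbeats 1000000

/-- For a nonnegative random variable `X` and `ρ ∈ (0,1)`,
`∑_{j≥1} E[log(1 + ρ^{j−1} X)] ≤ E[log(1+X)] + (1−ρ)⁻¹ ∫₀¹ u⁻¹ E[log(1 + uX)] du`,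
all quantities taken in `[0,∞]`. -/
theorem sum_log_moment_le
    {Ω : Type*} [MeasurableSpace Ω] (μ : Measure Ω) [IsProbabilityMeasure μ]
    (X : Ω → ℝ) (hX : ∀ ω, 0 ≤ X ω) (hXm : Measurable X)
    (ρ : ℝ) (hρ0 : 0 < ρ) (hρ1 : ρ < 1) :
    ∑' j : ℕ, ∫⁻ ω, ENNReal.ofReal (Real.log (1 + ρ ^ j * X ω)) ∂μ ≤
      (∫⁻ ω, ENNReal.ofReal (Real.log (1 + X ω)) ∂μ) +
        ENNReal.ofReal ((1 - ρ)⁻¹) *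
          ∫⁻ u in Set.Ioc (0 : ℝ) 1,
            (ENNReal.ofReal u)⁻¹ *
              ∫⁻ ω, ENNReal.ofReal (Real.log (1 + u * X ω)) ∂μ := by
  set F : ℝ → ENNReal := fun u => ∫⁻ ω, ENNReal.ofReal (Real.log (1 + u * X ω)) ∂μ with hF
  have hρle : ∀ {i j : ℕ}, i ≤ j → ρ ^ j ≤ ρ ^ i := fun h =>
    pow_le_pow_of_le_one hρ0.le hρ1.le h
  have hFmono : ∀ {u v : ℝ}, 0 ≤ u → u ≤ v → F u ≤ F v := by
    intro u v hu huv
    refine lintegral_mono fun ω => ENNReal.ofReal_le_ofReal ?_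
    have h1 : (0:ℝ) < 1 + u * X ω := by nlinarith [hX ω]
    apply Real.log_le_log h1
    nlinarith [hX ω]
  set g : ℝ → ENNReal := fun u => (ENNReal.ofReal u)⁻¹ * F u with hg
  set S : ℕ → Set ℝ := fun j => Set.Ioc (ρ ^ (j + 1)) (ρ ^ j) with hS
  have hSm : ∀ j, MeasurableSet (S j) := fun j => measurableSet_Ioc
  have hdisj : Pairwise (Function.onFun Disjoint S) := by
    have key : ∀ i j : ℕ, i < j → Disjoint (S i) (S j) := by
      intro i j hij
      rw [Set.disjoint_left]
      intro x hxi hxj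
      have h1 : x ≤ ρ ^ j := hxj.2
      have h2 : ρ ^ (i + 1) < x := hxi.1
      have : ρ ^ j ≤ ρ ^ (i + 1) := hρle hij
      linarith
    intro i j hij
    rcases lt_or_gt_of_ne hij with h | h
    · exact key i j h
    · exact (key j i h).symm
  have hsub : (⋃ j, S j) ⊆ Set.Ioc (0 : ℝ) 1 := by
    intro x hx
    obtain ⟨j, hj⟩ := Set.mem_iUnion.1 hx
    exact ⟨lt_of_le_of_lt (pow_pos hρ0 (j + 1)).le hj.1,
      hj.2.trans (by simpa using hρle (Nat.zero_le j))⟩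
  have key : ∀ j : ℕ, ENNReal.ofReal (1 - ρ) * F (ρ ^ (j + 1)) ≤
      ∫⁻ u in S j, g u := by
    intro j
    have hpow : (0:ℝ) < ρ ^ j := pow_pos hρ0 j
    have hconst : ∀ u ∈ S j,
        (ENNReal.ofReal (ρ ^ j))⁻¹ * F (ρ ^ (j + 1)) ≤ g u := by
      intro u hu
      refine mul_le_mul' ?_ (hFmono (pow_pos hρ0 (j+1)).le hu.1.le)
      exact ENNReal.inv_le_inv.mpr (ENNReal.ofReal_le_ofReal hu.2)
    calc ENNReal.ofReal (1 - ρ) * F (ρ ^ (j + 1))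
        = ((ENNReal.ofReal (ρ ^ j))⁻¹ * F (ρ ^ (j + 1))) * volume (S j) := by
          rw [hS]
          simp only [Real.volume_Ioc]
          have : ρ ^ j - ρ ^ (j + 1) = ρ ^ j * (1 - ρ) := by ring
          rw [this, ENNReal.ofReal_mul hpow.le]
          rw [mul_comm ((ENNReal.ofReal (ρ ^ j))⁻¹ * F (ρ ^ (j+1)))]
          rw [mul_assoc, ← mul_assoc (ENNReal.ofReal (ρ ^ j)), mul_comm (ENNReal.ofReal (ρ ^ j))]
          rw [mul_assoc, ← mul_assoc (ENNReal.ofReal (ρ ^ j))]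
          rw [ENNReal.mul_inv_cancel (by simpa using hpow) ENNReal.ofReal_ne_top, one_mul,
            mul_comm]
      _ = ∫⁻ _ in S j, ((ENNReal.ofReal (ρ ^ j))⁻¹ * F (ρ ^ (j + 1))) := by
          rw [setLIntegral_const]
      _ ≤ ∫⁻ u in S j, g u := setLIntegral_mono' (hSm j) hconst
  have hsum : ENNReal.ofReal (1 - ρ) * ∑' j : ℕ, F (ρ ^ (j + 1)) ≤
      ∫⁻ u in Set.Ioc (0 : ℝ) 1, g u := by
    rw [← ENNReal.tsum_mul_left]
    calc ∑' j : ℕ, ENNReal.ofReal (1 - ρ) * F (ρ ^ (j + 1))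
        ≤ ∑' j : ℕ, ∫⁻ u in S j, g u := ENNReal.tsum_le_tsum key
      _ = ∫⁻ u in ⋃ j, S j, g u := (lintegral_iUnion hSm hdisj g).symm
      _ ≤ ∫⁻ u in Set.Ioc (0 : ℝ) 1, g u := lintegral_mono_set hsub
  have h1ρ : (0:ℝ) < 1 - ρ := by linarith
  have htail : ∑' j : ℕ, F (ρ ^ (j + 1)) ≤
      ENNReal.ofReal ((1 - ρ)⁻¹) * ∫⁻ u in Set.Ioc (0 : ℝ) 1, g u := by
    rw [ENNReal.ofReal_inv_of_pos h1ρ, ← ENNReal.div_eq_inv_mul]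
    rw [ENNReal.le_div_iff_mul_le (Or.inl (by simpa using h1ρ))
      (Or.inl ENNReal.ofReal_ne_top)]
    rw [mul_comm]
    exact hsum
  have hsplit : ∑' j : ℕ, F (ρ ^ j) = F (ρ ^ 0) + ∑' j : ℕ, F (ρ ^ (j + 1)) :=
    tsum_eq_zero_add' ENNReal.summable
  calc ∑' j : ℕ, F (ρ ^ j) = F 1 + ∑' j : ℕ, F (ρ ^ (j + 1)) := by
        rw [hsplit, pow_zero]
    _ ≤ F 1 + ENNReal.ofReal ((1 - ρ)⁻¹) * ∫⁻ u in Set.Ioc (0 : ℝ) 1, g u :=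
        add_le_add le_rfl htail
    _ = _ := by simp [hF]
end

section
/- Let X be a nonnegative real random variable. Then ∫₀¹ u^{−1} E[log(1 + uX)] du = ∫₀^∞ v^{−1} log(1+v) · P(X ≥ v) dv, where both sides are elements of [0,∞]. -/
open MeasureTheory

lemma ftcA (u x : ℝ) (hu : 0 < u) (hx : 0 ≤ x) :
    ∫ v in (0:ℝ)..x, (1 + u * v)⁻¹ * u = Real.log (1 + u * x) := by
  have hpos : ∀ t ∈ Set.uIcc (0:ℝ) x, 0 < 1 + u * t := by
    intro t ht
    rw [Set.uIcc_of_le hx] at ht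
    nlinarith [ht.1]
  have hderiv : ∀ t ∈ Set.uIcc (0:ℝ) x,
      HasDerivAt (fun s => Real.log (1 + u * s)) ((1 + u * t)⁻¹ * u) t := by
    intro t ht
    have h1 : HasDerivAt (fun s : ℝ => 1 + u * s) u t := by
      simpa using ((hasDerivAt_id t).const_mul u).const_add 1
    exact (Real.hasDerivAt_log (hpos t ht).ne').comp t h1
  have hcont : ContinuousOn (fun t : ℝ => (1 + u * t)⁻¹ * u) (Set.uIcc 0 x) := by
    apply ContinuousOn.mul _ continuousOn_const
    exact (continuousOn_const.add (continuousOn_const.mul continuousOn_id)).inv₀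
      fun t ht => (hpos t ht).ne'
  have := intervalIntegral.integral_eq_sub_of_hasDerivAt hderiv
      (hcont.intervalIntegrable)
  simpa using this

lemma ftcB (v : ℝ) (hv : 0 < v) :
    ∫ u in (0:ℝ)..1, (1 + u * v)⁻¹ = Real.log (1 + v) / v := by
  have hpos : ∀ t ∈ Set.uIcc (0:ℝ) 1, 0 < 1 + t * v := by
    intro t ht
    rw [Set.uIcc_of_le zero_le_one] at ht
    nlinarith [ht.1]
  have hderiv : ∀ t ∈ Set.uIcc (0:ℝ) 1,
      HasDerivAt (fun s => v⁻¹ * Real.log (1 + s * v)) ((1 + t * v)⁻¹) t := by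
    intro t ht
    have h1 : HasDerivAt (fun s : ℝ => 1 + s * v) v t := by
      simpa using ((hasDerivAt_id t).mul_const v).const_add 1
    have h2 := ((Real.hasDerivAt_log (hpos t ht).ne').comp t h1).const_mul v⁻¹
    have : v⁻¹ * ((1 + t * v)⁻¹ * v) = (1 + t * v)⁻¹ := by
      field_simp
    rwa [this] at h2
  have hcont : ContinuousOn (fun t : ℝ => (1 + t * v)⁻¹) (Set.uIcc 0 1) :=
    (continuousOn_const.add (continuousOn_id.mul continuousOn_const)).inv₀
      fun t ht => (hpos t ht).ne'
  have := intervalIntegral.integral_eq_sub_of_hasDerivAt hderiv hcont.intervalIntegrable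
  rw [this]
  simp [div_eq_inv_mul]

lemma lintA (u x : ℝ) (hu : 0 < u) (hx : 0 ≤ x) :
    ∫⁻ v in Set.Ioc (0:ℝ) x, ENNReal.ofReal ((1 + u * v)⁻¹ * u)
      = ENNReal.ofReal (Real.log (1 + u * x)) := by
  have hpos : ∀ t ∈ Set.uIcc (0:ℝ) x, 0 < 1 + u * t := by
    intro t ht
    rw [Set.uIcc_of_le hx] at ht
    nlinarith [ht.1]
  have hcont : ContinuousOn (fun t : ℝ => (1 + u * t)⁻¹ * u) (Set.uIcc 0 x) := by
    apply ContinuousOn.mul _ continuousOn_const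
    exact (continuousOn_const.add (continuousOn_const.mul continuousOn_id)).inv₀
      fun t ht => (hpos t ht).ne'
  have hint : IntegrableOn (fun t : ℝ => (1 + u * t)⁻¹ * u) (Set.Ioc 0 x) :=
    (hcont.intervalIntegrable).1
  rw [← ofReal_integral_eq_lintegral_ofReal hint ?_]
  · rw [← intervalIntegral.integral_of_le hx, ftcA u x hu hx]
  · filter_upwards [ae_restrict_mem measurableSet_Ioc] with t ht
    have : 0 < 1 + u * t := by nlinarith [ht.1]
    positivity

lemma lintB (v : ℝ) (hv : 0 < v) :
    ∫⁻ u in Set.Ioc (0:ℝ) 1, ENNReal.ofReal ((1 + u * v)⁻¹)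
      = ENNReal.ofReal (Real.log (1 + v) / v) := by
  have hpos : ∀ t ∈ Set.uIcc (0:ℝ) 1, 0 < 1 + t * v := by
    intro t ht
    rw [Set.uIcc_of_le zero_le_one] at ht
    nlinarith [ht.1]
  have hcont : ContinuousOn (fun t : ℝ => (1 + t * v)⁻¹) (Set.uIcc 0 1) :=
    (continuousOn_const.add (continuousOn_id.mul continuousOn_const)).inv₀
      fun t ht => (hpos t ht).ne'
  have hint : IntegrableOn (fun t : ℝ => (1 + t * v)⁻¹) (Set.Ioc 0 1) :=
    (hcont.intervalIntegrable).1
  rw [← ofReal_integral_eq_lintegral_ofReal hint ?_]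
  · rw [← intervalIntegral.integral_of_le zero_le_one, ftcB v hv]
  · filter_upwards [ae_restrict_mem measurableSet_Ioc] with t ht
    have : 0 < 1 + t * v := by nlinarith [ht.1]
    positivity

/-- For a nonnegative random variable `X`,
`∫₀¹ u⁻¹ E[log(1 + uX)] du = ∫₀^∞ v⁻¹ log(1+v) P(X ≥ v) dv`, both sides in `[0,∞]`. -/
theorem integral_log_moment_layer_cake
    {Ω : Type*} [MeasurableSpace Ω] (μ : Measure Ω) [IsProbabilityMeasure μ]
    (X : Ω → ℝ) (hX : ∀ ω, 0 ≤ X ω) (hXm : Measurable X) :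
    ∫⁻ u in Set.Ioc (0 : ℝ) 1,
        (ENNReal.ofReal u)⁻¹ * ∫⁻ ω, ENNReal.ofReal (Real.log (1 + u * X ω)) ∂μ =
      ∫⁻ v in Set.Ioi (0 : ℝ),
        ENNReal.ofReal (Real.log (1 + v) / v) * μ {ω | v ≤ X ω} := by
  have hsm : ∀ v : ℝ, MeasurableSet {ω | v ≤ X ω} := fun v => hXm measurableSet_Ici
  -- Step 1: rewrite the inner integral
  have step1 : ∀ u ∈ Set.Ioc (0:ℝ) 1,
      (ENNReal.ofReal u)⁻¹ * ∫⁻ ω, ENNReal.ofReal (Real.log (1 + u * X ω)) ∂μ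
      = ∫⁻ ω, (∫⁻ v in Set.Ioi (0:ℝ),
          (if v ≤ X ω then ENNReal.ofReal ((1 + u * v)⁻¹) else 0)) ∂μ := by
    intro u hu
    have hu0 := hu.1
    have hb0 : ENNReal.ofReal u ≠ 0 := ne_of_gt (ENNReal.ofReal_pos.mpr hu0)
    have hbt : (ENNReal.ofReal u)⁻¹ ≠ ⊤ := ENNReal.inv_ne_top.mpr hb0
    have hinner : ∀ ω, ENNReal.ofReal (Real.log (1 + u * X ω)) =
        ∫⁻ v in Set.Ioi (0:ℝ),
          (if v ≤ X ω then ENNReal.ofReal ((1 + u * v)⁻¹ * u) else 0) := by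
      intro ω
      rw [← lintA u (X ω) hu0 (hX ω)]
      have heq : (fun v => if v ≤ X ω then ENNReal.ofReal ((1 + u * v)⁻¹ * u) else 0)
          = (Set.Iic (X ω)).indicator (fun v => ENNReal.ofReal ((1 + u * v)⁻¹ * u)) := by
        funext v; simp [Set.indicator_apply]
      rw [heq, lintegral_indicator measurableSet_Iic _,
        Measure.restrict_restrict measurableSet_Iic, Set.inter_comm, Set.Ioi_inter_Iic]
    simp_rw [hinner]
    rw [← lintegral_const_mul' _ _ hbt]
    apply lintegral_congr
    intro ω
    rw [← lintegral_const_mul' _ _ hbt]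
    apply setLIntegral_congr_fun measurableSet_Ioi
    intro v hv
    by_cases hvx : v ≤ X ω
    · simp only [hvx, if_true]
      have h1 : (0:ℝ) ≤ (1 + u * v)⁻¹ := by
        have : (0:ℝ) < 1 + u * v := by nlinarith [Set.mem_Ioi.mp hv]
        positivity
      rw [ENNReal.ofReal_mul h1, mul_comm (ENNReal.ofReal (1 + u * v)⁻¹),
        ← mul_assoc, ENNReal.inv_mul_cancel hb0 ENNReal.ofReal_ne_top, one_mul]
    · simp [hvx]
  rw [setLIntegral_congr_fun measurableSet_Ioc (fun u hu => step1 u hu)]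
  -- Step 2: swap ω and v
  have step2 : ∀ u : ℝ,
      (∫⁻ ω, (∫⁻ v in Set.Ioi (0:ℝ),
          (if v ≤ X ω then ENNReal.ofReal ((1 + u * v)⁻¹) else 0)) ∂μ)
      = ∫⁻ v in Set.Ioi (0:ℝ),
          ENNReal.ofReal ((1 + u * v)⁻¹) * μ {ω | v ≤ X ω} := by
    intro u
    rw [lintegral_lintegral_swap]
    · apply lintegral_congr
      intro v
      have : (fun ω => if v ≤ X ω then ENNReal.ofReal ((1 + u * v)⁻¹) else 0)
          = ({ω | v ≤ X ω}).indicator (fun _ => ENNReal.ofReal ((1 + u * v)⁻¹)) := by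
        funext ω; simp [Set.indicator_apply, Set.mem_setOf_eq]
      rw [this, lintegral_indicator (hsm v) _, setLIntegral_const]
    · apply Measurable.aemeasurable
      apply Measurable.ite
      · exact measurableSet_le measurable_snd (hXm.comp measurable_fst)
      · exact ENNReal.measurable_ofReal.comp
          ((measurable_const.add (measurable_snd.const_mul u)).inv)
      · exact measurable_const
  simp_rw [step2]
  -- Step 3: swap u and v
  rw [lintegral_lintegral_swap]
  · apply setLIntegral_congr_fun measurableSet_Ioi
    intro v hv
    beta_reduce
    rw [lintegral_mul_const' _ _ (measure_ne_top μ _), lintB v (Set.mem_Ioi.mp hv)]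
  · apply Measurable.aemeasurable
    apply Measurable.mul
    · exact ENNReal.measurable_ofReal.comp
        ((measurable_const.add (measurable_fst.mul measurable_snd)).inv)
    · have hanti : Antitone (fun v : ℝ => μ {ω | v ≤ X ω}) := by
        intro a b hab
        exact measure_mono fun ω h => hab.trans h
      exact hanti.measurable.comp measurable_snd
end

section
/- Let X be a nonnegative real random variable with E[(log⁺ X)²] < ∞ and let ρ ∈ (0,1). Then ∑_{j≥1} E[log(1 + ρ^{j−1} X)] < ∞. -/
open MeasureTheory

/-- `log⁺ x = max (log x) 0`. -/
noncomputable def logPlus (x : ℝ) : ℝ := max (Real.log x) 0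

lemma log_one_add_le {x : ℝ} (hx : 0 ≤ x) : Real.log (1 + x) ≤ 1 + logPlus x := by
  have hL : 0 ≤ logPlus x := le_max_right _ _
  rcases le_or_gt x 1 with h | h
  · have := Real.log_le_sub_one_of_pos (x := 1 + x) (by linarith)
    linarith
  · have h2 : Real.log (1 + x) ≤ Real.log (2 * x) :=
      Real.log_le_log (by linarith) (by linarith)
    have h3 : Real.log (2 * x) = Real.log 2 + Real.log x := by
      rw [Real.log_mul (by norm_num) (by linarith)]
    have h4 : Real.log 2 ≤ 1 := by
      have := Real.log_le_sub_one_of_pos (x := 2) (by norm_num); linarith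
    have h5 : Real.log x ≤ logPlus x := le_max_left _ _
    linarith

set_option maxHeartbeats 1000000 in
lemma key (ρ : ℝ) (hρ0 : 0 < ρ) (hρ1 : ρ < 1) (x : ℝ) (hx : 0 ≤ x) :
    ∑' j : ℕ, ENNReal.ofReal (Real.log (1 + ρ ^ j * x)) ≤
      ENNReal.ofReal ((2 * (Real.log ρ⁻¹)⁻¹ + 2 + (1 - ρ)⁻¹) * (1 + logPlus x ^ 2)) := by
  set L := logPlus x with hLdef
  have hL : 0 ≤ L := le_max_right _ _
  have hℓ : 0 < Real.log ρ⁻¹ := Real.log_pos (one_lt_inv₀ hρ0 |>.mpr hρ1)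
  set ℓ := Real.log ρ⁻¹ with hldef
  set n := Nat.ceil (L / ℓ) with hndef
  have hn_le : (n : ℝ) ≤ L / ℓ + 1 := (Nat.ceil_lt_add_one (div_nonneg hL hℓ.le)).le
  have hxe : x ≤ Real.exp L := by
    rcases le_or_gt x 1 with h | h
    · exact h.trans (Real.one_le_exp hL)
    · have hlog : Real.log x ≤ L := le_max_left _ _
      calc x = Real.exp (Real.log x) := (Real.exp_log (by linarith)).symm
        _ ≤ Real.exp L := Real.exp_le_exp.mpr hlog
  have hρn : ρ ^ n * x ≤ 1 := by
    have h1 : L ≤ n * ℓ := by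
      have := Nat.le_ceil (L / ℓ)
      rw [div_le_iff₀ hℓ] at this
      exact this
    have h2 : ρ ^ n = Real.exp (-(n * ℓ)) := by
      rw [hldef, Real.log_inv, show -((n:ℝ) * -Real.log ρ) = n * Real.log ρ by ring,
        Real.exp_nat_mul, Real.exp_log hρ0]
    calc ρ ^ n * x ≤ Real.exp (-(n * ℓ)) * Real.exp L := by
          rw [h2]; exact mul_le_mul_of_nonneg_left hxe (Real.exp_pos _).le
      _ = Real.exp (L - n * ℓ) := by rw [← Real.exp_add]; ring_nf
      _ ≤ 1 := Real.exp_le_one_iff.mpr (by linarith)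
  -- split the sum
  have hsplit := (Summable.sum_add_tsum_nat_add' (f := fun j : ℕ =>
    ENNReal.ofReal (Real.log (1 + ρ ^ j * x))) (k := n) ENNReal.summable).symm
  rw [hsplit]
  have hhead : ∑ j ∈ Finset.range n, ENNReal.ofReal (Real.log (1 + ρ ^ j * x))
      ≤ n * ENNReal.ofReal (1 + L) := by
    calc ∑ j ∈ Finset.range n, ENNReal.ofReal (Real.log (1 + ρ ^ j * x))
        ≤ ∑ _j ∈ Finset.range n, ENNReal.ofReal (1 + L) := by
          apply Finset.sum_le_sum
          intro j _
          apply ENNReal.ofReal_le_ofReal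
          have hpj : ρ ^ j ≤ 1 := pow_le_one₀ hρ0.le hρ1.le
          have h1 : Real.log (1 + ρ ^ j * x) ≤ Real.log (1 + x) := by
            apply Real.log_le_log (by positivity)
            nlinarith
          exact h1.trans (log_one_add_le hx)
      _ = n * ENNReal.ofReal (1 + L) := by
          rw [Finset.sum_const, nsmul_eq_mul, Finset.card_range]
  have htail : ∑' i : ℕ, ENNReal.ofReal (Real.log (1 + ρ ^ (i + n) * x))
      ≤ ENNReal.ofReal ((1 - ρ)⁻¹) := by
    calc ∑' i : ℕ, ENNReal.ofReal (Real.log (1 + ρ ^ (i + n) * x))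
        ≤ ∑' i : ℕ, ENNReal.ofReal ρ ^ i := by
          apply ENNReal.tsum_le_tsum
          intro i
          rw [← ENNReal.ofReal_pow hρ0.le]
          apply ENNReal.ofReal_le_ofReal
          have h1 : Real.log (1 + ρ ^ (i + n) * x) ≤ ρ ^ (i + n) * x := by
            have := Real.log_le_sub_one_of_pos (x := 1 + ρ ^ (i + n) * x) (by positivity)
            linarith
          have h2 : ρ ^ (i + n) * x = ρ ^ i * (ρ ^ n * x) := by ring
          have h3 : ρ ^ i * (ρ ^ n * x) ≤ ρ ^ i * 1 :=
            mul_le_mul_of_nonneg_left hρn (by positivity)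
          linarith [h1, h2 ▸ h1]
      _ = (1 - ENNReal.ofReal ρ)⁻¹ := ENNReal.tsum_geometric _
      _ = ENNReal.ofReal ((1 - ρ)⁻¹) := by
          rw [ENNReal.ofReal_inv_of_pos (by linarith), ENNReal.ofReal_sub _ hρ0.le,
            ENNReal.ofReal_one]
  calc _ ≤ n * ENNReal.ofReal (1 + L) + ENNReal.ofReal ((1 - ρ)⁻¹) :=
        add_le_add hhead htail
    _ = ENNReal.ofReal (n * (1 + L) + (1 - ρ)⁻¹) := by
        have hnn1 : (0:ℝ) ≤ (n:ℝ) * (1 + L) := mul_nonneg (Nat.cast_nonneg n) (by linarith)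
        have hnn2 : (0:ℝ) ≤ (1 - ρ)⁻¹ := inv_nonneg.mpr (by linarith)
        conv_rhs => rw [ENNReal.ofReal_add hnn1 hnn2,
          ENNReal.ofReal_mul (Nat.cast_nonneg n), ENNReal.ofReal_natCast]
    _ ≤ _ := by
        apply ENNReal.ofReal_le_ofReal
        have ha : 0 < ℓ⁻¹ := by positivity
        have hb : 0 < (1 - ρ)⁻¹ := by
          have : (0:ℝ) < 1 - ρ := by linarith
          positivity
        rw [div_eq_mul_inv] at hn_le
        nlinarith [sq_nonneg L, sq_nonneg (L - 1), mul_nonneg ha.le (sq_nonneg L),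
          mul_nonneg hb.le (sq_nonneg L), mul_nonneg hL (mul_nonneg ha.le hL)]

/-- If `X ≥ 0` has `E[(log⁺ X)²] < ∞` and `ρ ∈ (0,1)`, then
`∑_{j≥1} E[log(1 + ρ^{j−1} X)] < ∞`. -/
theorem sum_log_moment_finite
    {Ω : Type*} [MeasurableSpace Ω] (μ : Measure Ω) [IsProbabilityMeasure μ]
    (X : Ω → ℝ) (hX : ∀ ω, 0 ≤ X ω) (hXm : Measurable X)
    (hmom : ∫⁻ ω, ENNReal.ofReal ((logPlus (X ω)) ^ 2) ∂μ < ⊤)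
    (ρ : ℝ) (hρ0 : 0 < ρ) (hρ1 : ρ < 1) :
    ∑' j : ℕ, ∫⁻ ω, ENNReal.ofReal (Real.log (1 + ρ ^ j * X ω)) ∂μ < ⊤ := by
  set C : ℝ := 2 * (Real.log ρ⁻¹)⁻¹ + 2 + (1 - ρ)⁻¹ with hCdef
  have hℓ : 0 < Real.log ρ⁻¹ := Real.log_pos (one_lt_inv₀ hρ0 |>.mpr hρ1)
  have hC : 0 ≤ C := by
    have h1 : 0 ≤ (Real.log ρ⁻¹)⁻¹ := inv_nonneg.mpr hℓ.le
    have h2 : (0:ℝ) ≤ (1 - ρ)⁻¹ := inv_nonneg.mpr (by linarith)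
    rw [hCdef]; linarith
  have hmeas : ∀ j : ℕ,
      Measurable (fun ω => ENNReal.ofReal (Real.log (1 + ρ ^ j * X ω))) := fun j =>
    (Real.measurable_log.comp ((hXm.const_mul (ρ ^ j)).const_add 1)).ennreal_ofReal
  rw [← lintegral_tsum fun j => (hmeas j).aemeasurable]
  have hbound : ∫⁻ ω, ∑' j : ℕ, ENNReal.ofReal (Real.log (1 + ρ ^ j * X ω)) ∂μ
      ≤ ∫⁻ ω, ENNReal.ofReal (C * (1 + logPlus (X ω) ^ 2)) ∂μ :=
    lintegral_mono fun ω => key ρ hρ0 hρ1 (X ω) (hX ω)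
  refine lt_of_le_of_lt hbound ?_
  have heq : ∀ ω, ENNReal.ofReal (C * (1 + logPlus (X ω) ^ 2))
      = ENNReal.ofReal C * (1 + ENNReal.ofReal (logPlus (X ω) ^ 2)) := by
    intro ω
    rw [ENNReal.ofReal_mul hC, ENNReal.ofReal_add zero_le_one (sq_nonneg _),
      ENNReal.ofReal_one]
  simp_rw [heq]
  rw [lintegral_const_mul' _ _ ENNReal.ofReal_ne_top]
  have hmeas2 : Measurable fun ω => ENNReal.ofReal (logPlus (X ω) ^ 2) := by
    have : Measurable (logPlus ∘ X) :=
      (Real.measurable_log.max measurable_const).comp hXm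
    exact (this.pow_const 2).ennreal_ofReal
  rw [lintegral_add_left measurable_const]
  simp only [lintegral_const, measure_univ, mul_one, one_mul]
  exact ENNReal.mul_lt_top ENNReal.ofReal_lt_top (ENNReal.add_lt_top.mpr ⟨ENNReal.one_lt_top, hmom⟩)
end

section
/- Let α ∈ ℝ, 0 ≤ β < 1, and γ, δ ∈ ℝ with δ ≥ |γ| (so that c(x) := γx + δ|x| ≥ 0 for every x ∈ ℝ). Then for every x ∈ ℝ the map φ: s ↦ α + βs + c(x) e^{−s/2} maps the interval [α/(1−β), ∞) into itself, and its Lipschitz coefficient on this interval satisfies Λ(φ) ≤ max{β, 2^{−1} c(x) exp(−α/(2(1−β))) − β}. -/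
/-- The Lipschitz coefficient of `f` on a set `s`: the infimum of all Lipschitz
constants of `f` on `s`. -/
noncomputable def lipCoefOn {α β : Type*} [PseudoMetricSpace α] [PseudoMetricSpace β]
    (f : α → β) (s : Set α) : ℝ :=
  sInf {K : ℝ | 0 ≤ K ∧ LipschitzOnWith (Real.toNNReal K) f s}

/-- For `α ∈ ℝ`, `0 ≤ β < 1`, `δ ≥ |γ|` (so `c(x) = γx + δ|x| ≥ 0`),
the EGARCH(1,1) map `φ : s ↦ α + βs + c(x) e^{−s/2}` maps `[α/(1−β),∞)` into itself and
its Lipschitz coefficient on this interval is at most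
`max {β, c(x)/2 · exp(−α/(2(1−β))) − β}`. -/
theorem egarch_map_mapsTo_and_lipCoef
    (α β γ δ : ℝ) (hβ0 : 0 ≤ β) (hβ1 : β < 1) (hγδ : |γ| ≤ δ) (x : ℝ) :
    Set.MapsTo (fun s : ℝ => α + β * s + (γ * x + δ * |x|) * Real.exp (-s / 2))
        (Set.Ici (α / (1 - β))) (Set.Ici (α / (1 - β))) ∧
      lipCoefOn (fun s : ℝ => α + β * s + (γ * x + δ * |x|) * Real.exp (-s / 2))
          (Set.Ici (α / (1 - β)))
        ≤ max β ((γ * x + δ * |x|) / 2 * Real.exp (-(α / (2 * (1 - β)))) - β) := by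
  set c : ℝ := γ * x + δ * |x| with hc
  have hc0 : 0 ≤ c := by
    have h1 : -|γ * x| ≤ γ * x := neg_abs_le _
    have h2 : |γ * x| = |γ| * |x| := abs_mul _ _
    nlinarith [abs_nonneg x, abs_nonneg γ]
  have h1β : 0 < 1 - β := by linarith
  set m : ℝ := α / (1 - β) with hm
  have hαm : α + β * m = m := by
    rw [hm]
    field_simp
    ring
  set K : ℝ := max β (c / 2 * Real.exp (-(α / (2 * (1 - β)))) - β) with hK
  have hK0 : 0 ≤ K := le_trans hβ0 (le_max_left _ _)
  constructor
  · intro s hs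
    simp only [Set.mem_Ici] at hs ⊢
    have he : 0 ≤ c * Real.exp (-s / 2) :=
      mul_nonneg hc0 (Real.exp_pos _).le
    nlinarith
  · have hlip : LipschitzOnWith (Real.toNNReal K)
        (fun s : ℝ => α + β * s + c * Real.exp (-s / 2)) (Set.Ici m) := by
      apply (convex_Ici m).lipschitzOnWith_of_nnnorm_hasDerivWithin_le
        (f' := fun s => β - c / 2 * Real.exp (-s / 2))
      · intro s _
        have hd : HasDerivAt (fun s : ℝ => α + β * s + c * Real.exp (-s / 2))
            (β - c / 2 * Real.exp (-s / 2)) s := by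
          have h1 : HasDerivAt (fun s : ℝ => -s / 2) (-1 / 2) s :=
            ((hasDerivAt_id s).neg.div_const 2)
          have h2 := h1.exp
          have h3 := ((hasDerivAt_const s α).add ((hasDerivAt_const s β).mul
            (hasDerivAt_id s))).add (h2.const_mul c)
          refine HasDerivAt.congr_deriv h3 ?_
          ring
        exact hd.hasDerivWithinAt
      · intro s hs
        rw [← NNReal.coe_le_coe, coe_nnnorm, Real.coe_toNNReal _ hK0, Real.norm_eq_abs]
        have hsm : m ≤ s := hs
        have hmono : Real.exp (-s / 2) ≤ Real.exp (-(α / (2 * (1 - β)))) := by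
          apply Real.exp_le_exp.mpr
          have : -(α / (2 * (1 - β))) = -m / 2 := by
            rw [hm, neg_div, div_div, mul_comm (1 - β) 2]
          rw [this]
          linarith
        have hpos : 0 ≤ c / 2 * Real.exp (-s / 2) :=
          mul_nonneg (by linarith) (Real.exp_pos _).le
        have hb : c / 2 * Real.exp (-s / 2) ≤ c / 2 * Real.exp (-(α / (2 * (1 - β)))) :=
          mul_le_mul_of_nonneg_left hmono (by linarith)
        rw [abs_le]
        constructor
        · have := le_max_right β (c / 2 * Real.exp (-(α / (2 * (1 - β)))) - β)
          rw [← hK] at this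
          linarith
        · have := le_max_left β (c / 2 * Real.exp (-(α / (2 * (1 - β)))) - β)
          rw [← hK] at this
          linarith
    apply csInf_le
    · exact ⟨0, fun y hy => hy.1⟩
    · exact ⟨hK0, hlip⟩
end

section
/- Let (V_j)_{j≥1} be iid real random variables with E[V₁²] < 1. Then the random series S = ∑_{l=1}^∞ ∏_{k=1}^{l−1} V_k (with the convention that the empty product equals 1) converges almost surely and in L², and E[S²] = 2 (E V₁)/((1 − E V₁)(1 − E V₁²)) + 1/(1 − E V₁²). -/
open MeasureTheory ProbabilityTheory Filter
open scoped ENNReal NNReal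

lemma aux_prod_integral {Ω : Type*} [MeasurableSpace Ω] (μ : Measure Ω) [IsProbabilityMeasure μ]
    (W : ℕ → Ω → ℝ) (hm : ∀ k, Measurable (W k))
    (hi : iIndepFun W μ)
    (hint : ∀ k, Integrable (W k) μ) (n : ℕ) :
    Integrable (fun ω => ∏ k ∈ Finset.range n, W k ω) μ ∧
      ∫ ω, ∏ k ∈ Finset.range n, W k ω ∂μ = ∏ k ∈ Finset.range n, ∫ ω, W k ω ∂μ := by
  induction n with
  | zero => simp
  | succ n ih =>
    have hindep := hi.indepFun_prod_range_succ hm n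
    have hprodeq : (∏ j ∈ Finset.range n, W j) = fun ω => ∏ k ∈ Finset.range n, W k ω := by
      funext ω; simp
    rw [hprodeq] at hindep
    have hInt : Integrable ((fun ω => ∏ k ∈ Finset.range n, W k ω) * W n) μ :=
      hindep.integrable_mul ih.1 (hint n)
    have hIntegral := hindep.integral_mul_eq_mul_integral ih.1.aestronglyMeasurable (hint n).aestronglyMeasurable
    constructor
    · have : (fun ω => ∏ k ∈ Finset.range (n+1), W k ω) =
        (fun ω => ∏ k ∈ Finset.range n, W k ω) * W n := by
        funext ω; simp [Finset.prod_range_succ]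
      rw [this]; exact hInt
    · have h1 : (fun ω => ∏ k ∈ Finset.range (n+1), W k ω) =
        (fun ω => ∏ k ∈ Finset.range n, W k ω) * W n := by
        funext ω; simp [Finset.prod_range_succ]
      rw [h1, hIntegral, ih.2, Finset.prod_range_succ]

lemma aux_key {Ω : Type*} [MeasurableSpace Ω] (μ : Measure Ω) [IsProbabilityMeasure μ]
    (V : ℕ → Ω → ℝ) (hVm : ∀ j, Measurable (V j))
    (hindep : iIndepFun V μ)
    (hident : ∀ j, Measure.map (V j) μ = Measure.map (V 0) μ)
    (f g : ℝ → ℝ) (hf : Measurable f) (hg : Measurable g)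
    (hfi : Integrable (fun ω => f (V 0 ω)) μ) (hgi : Integrable (fun ω => g (V 0 ω)) μ)
    (l j : ℕ) (hlj : l ≤ j) :
    Integrable (fun ω => (∏ k ∈ Finset.range l, f (V k ω)) *
        ∏ k ∈ Finset.Ico l j, g (V k ω)) μ ∧
      ∫ ω, (∏ k ∈ Finset.range l, f (V k ω)) * ∏ k ∈ Finset.Ico l j, g (V k ω) ∂μ =
        (∫ ω, f (V 0 ω) ∂μ) ^ l * (∫ ω, g (V 0 ω) ∂μ) ^ (j - l) := by
  classical
  set φ : ℕ → ℝ → ℝ := fun k => if k < l then f else g with hφ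
  have hφm : ∀ k, Measurable (φ k) := by
    intro k; by_cases h : k < l <;> simp [hφ, h, hf, hg]
  set W : ℕ → Ω → ℝ := fun k ω => φ k (V k ω) with hW
  have hWm : ∀ k, Measurable (W k) := fun k => (hφm k).comp (hVm k)
  have hWi : iIndepFun W μ := hindep.comp φ hφm
  -- integral transfer
  have hTrans : ∀ (h : ℝ → ℝ), Measurable h → ∀ k,
      ∫ ω, h (V k ω) ∂μ = ∫ ω, h (V 0 ω) ∂μ := by
    intro h hh k
    rw [← integral_map (hVm k).aemeasurable hh.aestronglyMeasurable, hident k,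
      integral_map (hVm 0).aemeasurable hh.aestronglyMeasurable]
  have hTransInt : ∀ (h : ℝ → ℝ), Measurable h → Integrable (fun ω => h (V 0 ω)) μ →
      ∀ k, Integrable (fun ω => h (V k ω)) μ := by
    intro h hh hi0 k
    have h1 : Integrable h (Measure.map (V 0) μ) :=
      (integrable_map_measure hh.aestronglyMeasurable (hVm 0).aemeasurable).mpr hi0
    rw [← hident k] at h1
    exact (integrable_map_measure hh.aestronglyMeasurable (hVm k).aemeasurable).mp h1
  have hWint : ∀ k, Integrable (W k) μ := by
    intro k; by_cases h : k < l
    · simpa [hW, hφ, h] using hTransInt f hf hfi k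
    · simpa [hW, hφ, h] using hTransInt g hg hgi k
  have hsplit : ∀ ω, (∏ k ∈ Finset.range l, f (V k ω)) *
      ∏ k ∈ Finset.Ico l j, g (V k ω) = ∏ k ∈ Finset.range j, W k ω := by
    intro ω
    rw [← Finset.prod_range_mul_prod_Ico (fun k => W k ω) hlj]
    congr 1
    · exact Finset.prod_congr rfl fun k hk => by
        simp [hW, hφ, Finset.mem_range.mp hk]
    · exact Finset.prod_congr rfl fun k hk => by
        simp [hW, hφ, not_lt.mpr (Finset.mem_Ico.mp hk).1]
  obtain ⟨hI, hE⟩ := aux_prod_integral μ W hWm hWi hWint j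
  constructor
  · exact hI.congr (Filter.Eventually.of_forall fun ω => (hsplit ω).symm)
  · calc ∫ ω, (∏ k ∈ Finset.range l, f (V k ω)) * ∏ k ∈ Finset.Ico l j, g (V k ω) ∂μ
        = ∫ ω, ∏ k ∈ Finset.range j, W k ω ∂μ := by
          exact integral_congr_ae (Filter.Eventually.of_forall hsplit)
      _ = ∏ k ∈ Finset.range j, ∫ ω, W k ω ∂μ := hE
      _ = (∫ ω, f (V 0 ω) ∂μ) ^ l * (∫ ω, g (V 0 ω) ∂μ) ^ (j - l) := by
          rw [← Finset.prod_range_mul_prod_Ico (fun k => ∫ ω, W k ω ∂μ) hlj]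
          congr 1
          · rw [Finset.prod_congr rfl fun k hk => ?_, Finset.prod_const, Finset.card_range]
            have hkl := Finset.mem_range.mp hk
            simp only [hW, hφ, if_pos hkl]
            exact hTrans f hf k
          · rw [Finset.prod_congr rfl fun k hk => ?_, Finset.prod_const, Nat.card_Ico]
            have hkl := (Finset.mem_Ico.mp hk).1
            simp only [hW, hφ, if_neg (not_lt.mpr hkl)]
            exact hTrans g hg k

set_option maxHeartbeats 1000000 in
lemma aux_tsum_value {s m r : ℝ} (hs0 : 0 ≤ s) (hs1 : s < 1) (hr0 : 0 ≤ r) (hr1 : r < 1)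
    (hrs : r ^ 2 = s) (hm : |m| ≤ r) :
    Summable (fun p : ℕ × ℕ => s ^ min p.1 p.2 * m ^ (max p.1 p.2 - min p.1 p.2)) ∧
    ∑' p : ℕ × ℕ, s ^ min p.1 p.2 * m ^ (max p.1 p.2 - min p.1 p.2) =
      2 * m / ((1 - m) * (1 - s)) + 1 / (1 - s) := by
  classical
  set C : ℕ × ℕ → ℝ := fun p => s ^ min p.1 p.2 * m ^ (max p.1 p.2 - min p.1 p.2) with hCdef
  have hm1 : |m| < 1 := lt_of_le_of_lt hm hr1
  have hCb : ∀ p : ℕ × ℕ, |C p| ≤ r ^ p.1 * r ^ p.2 := by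
    intro ⟨l, j⟩
    have h1 : |C (l, j)| = s ^ min l j * |m| ^ (max l j - min l j) := by
      rw [hCdef]; rw [abs_mul, abs_pow, abs_pow, abs_of_nonneg hs0]
    rw [h1, ← pow_add]
    calc s ^ min l j * |m| ^ (max l j - min l j)
        ≤ s ^ min l j * r ^ (max l j - min l j) := by
          apply mul_le_mul_of_nonneg_left (pow_le_pow_left₀ (abs_nonneg m) hm _)
          positivity
      _ = r ^ (2 * min l j) * r ^ (max l j - min l j) := by
          rw [pow_mul, hrs]
      _ = r ^ (2 * min l j + (max l j - min l j)) := by rw [pow_add]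
      _ = r ^ (l + j) := by congr 1; omega
  have hgeo_r : Summable fun n : ℕ => r ^ n := summable_geometric_of_lt_one hr0 hr1
  have hCsum : Summable C :=
    Summable.of_norm_bounded (hgeo_r.mul_of_nonneg hgeo_r
      (fun n => pow_nonneg hr0 n) fun n => pow_nonneg hr0 n) fun p => by
        simpa [Real.norm_eq_abs] using hCb p
  refine ⟨hCsum, ?_⟩
  have hm_ne : (1 : ℝ) - m ≠ 0 := by
    have : m < 1 := lt_of_abs_lt hm1
    linarith
  have hs_ne : (1 : ℝ) - s ≠ 0 := by linarith
  have hgm : Summable fun n : ℕ => m ^ n :=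
    summable_geometric_of_norm_lt_one (by rwa [Real.norm_eq_abs])
  have hgmn : Summable fun n : ℕ => ‖m ^ n‖ := by
    simpa [Real.norm_eq_abs, abs_pow] using
      summable_geometric_of_lt_one (abs_nonneg m) hm1
  have hgs : Summable fun n : ℕ => s ^ n := summable_geometric_of_lt_one hs0 hs1
  have htsm : ∑' n : ℕ, m ^ n = (1 - m)⁻¹ := tsum_geometric_of_norm_lt_one (by rwa [Real.norm_eq_abs])
  have htss : ∑' n : ℕ, s ^ n = (1 - s)⁻¹ := tsum_geometric_of_lt_one hs0 hs1
  -- decomposition into diagonal, upper, lower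
  set U : Set (ℕ × ℕ) := {p | p.1 < p.2} with hU
  set L : Set (ℕ × ℕ) := {p | p.2 < p.1} with hL
  set D : Set (ℕ × ℕ) := {p | p.1 = p.2} with hD
  have hdecomp : ∀ p, C p = U.indicator C p + L.indicator C p + D.indicator C p := by
    intro p
    rcases lt_trichotomy p.1 p.2 with h | h | h
    · rw [Set.indicator_of_mem (by exact h) C,
        Set.indicator_of_notMem (by simp [hL]; omega) C,
        Set.indicator_of_notMem (by simp [hD]; omega) C]; ring
    · rw [Set.indicator_of_notMem (by simp [hU]; omega) C,
        Set.indicator_of_notMem (by simp [hL]; omega) C,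
        Set.indicator_of_mem (by exact h) C]; ring
    · rw [Set.indicator_of_notMem (by simp [hU]; omega) C,
        Set.indicator_of_mem (by exact h) C,
        Set.indicator_of_notMem (by simp [hD]; omega) C]; ring
  have hsplit : ∑' p, C p = (∑' p, U.indicator C p + ∑' p, L.indicator C p)
      + ∑' p, D.indicator C p := by
    rw [tsum_congr hdecomp, Summable.tsum_add ((hCsum.indicator U).add (hCsum.indicator L))
      (hCsum.indicator D), Summable.tsum_add (hCsum.indicator U) (hCsum.indicator L)]
  -- products
  have hprod : ∀ c : ℝ, Summable (fun q : ℕ × ℕ => s ^ q.1 * (c * m ^ q.2)) ∧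
      ∑' q : ℕ × ℕ, s ^ q.1 * (c * m ^ q.2) = (1 - s)⁻¹ * (c * (1 - m)⁻¹) := by
    intro c
    have hsn : Summable fun n : ℕ => ‖s ^ n‖ := by
      simpa [Real.norm_eq_abs, abs_pow, abs_of_nonneg hs0] using hgs
    have hcn : Summable fun n : ℕ => ‖c * m ^ n‖ := by
      simp only [norm_mul]
      exact hgmn.mul_left ‖c‖
    have hsum2 : Summable fun q : ℕ × ℕ => s ^ q.1 * (c * m ^ q.2) :=
      summable_mul_of_summable_norm hsn hcn
    refine ⟨hsum2, ?_⟩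
    rw [← tsum_mul_tsum_of_summable_norm hsn hcn, htss, tsum_mul_left, htsm]
  -- upper part
  have hUval : ∑' p, U.indicator C p = (1 - s)⁻¹ * (m * (1 - m)⁻¹) := by
    set i : ℕ × ℕ → ℕ × ℕ := fun q => (q.1, q.1 + q.2 + 1) with hi
    have hinj : Function.Injective i := by
      intro q q' h
      simp only [hi, Prod.mk.injEq] at h
      obtain ⟨h1, h2⟩ := h
      exact Prod.ext h1 (by omega)
    have hsupp : Function.support (U.indicator C) ⊆ Set.range i := by
      intro p hp
      have hpU : p ∈ U := by
        by_contra h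
        exact hp (Set.indicator_of_notMem h C)
      exact ⟨(p.1, p.2 - p.1 - 1), by
        simp only [hi, Prod.mk.injEq]
        have : p.1 < p.2 := hpU
        exact Prod.ext rfl (by omega)⟩
    have heq : ∀ q : ℕ × ℕ, U.indicator C (i q) = s ^ q.1 * (m * m ^ q.2) := by
      intro q
      have hmem : i q ∈ U := by simp only [hi, hU, Set.mem_setOf_eq]; omega
      rw [Set.indicator_of_mem hmem C]
      simp only [hCdef]
      have h1 : min (i q).1 (i q).2 = q.1 := by simp only [hi]; omega
      have h2 : max (i q).1 (i q).2 - min (i q).1 (i q).2 = q.2 + 1 := by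
        simp only [hi]; omega
      rw [h2, h1, pow_succ]
      ring
    rw [← hinj.tsum_eq hsupp, tsum_congr heq, (hprod m).2]
  have hLval : ∑' p, L.indicator C p = (1 - s)⁻¹ * (m * (1 - m)⁻¹) := by
    set i : ℕ × ℕ → ℕ × ℕ := fun q => (q.1 + q.2 + 1, q.1) with hi
    have hinj : Function.Injective i := by
      intro q q' h
      simp only [hi, Prod.mk.injEq] at h
      obtain ⟨h1, h2⟩ := h
      exact Prod.ext h2 (by omega)
    have hsupp : Function.support (L.indicator C) ⊆ Set.range i := by
      intro p hp
      have hpL : p ∈ L := by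
        by_contra h
        exact hp (Set.indicator_of_notMem h C)
      have hlt : p.2 < p.1 := hpL
      exact ⟨(p.2, p.1 - p.2 - 1), by
        simp only [hi, Prod.mk.injEq]
        exact Prod.ext (by omega) rfl⟩
    have heq : ∀ q : ℕ × ℕ, L.indicator C (i q) = s ^ q.1 * (m * m ^ q.2) := by
      intro q
      have hmem : i q ∈ L := by simp only [hi, hL, Set.mem_setOf_eq]; omega
      rw [Set.indicator_of_mem hmem C]
      simp only [hCdef]
      have h1 : min (i q).1 (i q).2 = q.1 := by simp only [hi]; omega
      have h2 : max (i q).1 (i q).2 - min (i q).1 (i q).2 = q.2 + 1 := by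
        simp only [hi]; omega
      rw [h2, h1, pow_succ]
      ring
    rw [← hinj.tsum_eq hsupp, tsum_congr heq, (hprod m).2]
  have hDval : ∑' p, D.indicator C p = (1 - s)⁻¹ := by
    set i : ℕ → ℕ × ℕ := fun l => (l, l) with hi
    have hinj : Function.Injective i := by
      intro q q' h
      have := congrArg Prod.fst h
      simpa [hi] using this
    have hsupp : Function.support (D.indicator C) ⊆ Set.range i := by
      intro p hp
      have hpD : p ∈ D := by
        by_contra h
        exact hp (Set.indicator_of_notMem h C)
      have heqd : p.1 = p.2 := hpD
      exact ⟨p.1, by simp only [hi]; exact Prod.ext rfl heqd⟩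
    have heq : ∀ l : ℕ, D.indicator C (i l) = s ^ l := by
      intro l
      have hmem : i l ∈ D := by simp only [hi, hD, Set.mem_setOf_eq]
      rw [Set.indicator_of_mem hmem C]
      simp [hCdef, hi]
    rw [← hinj.tsum_eq hsupp, tsum_congr heq, htss]
  rw [hsplit, hUval, hLval, hDval]
  field_simp
  ring

set_option maxHeartbeats 2000000 in
/-- If `(V_j)` are iid real random variables with `E[V₁²] < 1`, then the
series `S = ∑_{l≥1} ∏_{k=1}^{l−1} V_k` (empty product `= 1`) converges a.s. and in `L²`,
and `E[S²] = 2 E V₁ / ((1 − E V₁)(1 − E V₁²)) + 1/(1 − E V₁²)`. -/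
theorem iid_product_series_l2
    {Ω : Type*} [MeasurableSpace Ω] (μ : Measure Ω) [IsProbabilityMeasure μ]
    (V : ℕ → Ω → ℝ) (hVm : ∀ j, Measurable (V j))
    (hindep : iIndepFun V μ)
    (hident : ∀ j, Measure.map (V j) μ = Measure.map (V 0) μ)
    (hint : Integrable (fun ω => (V 0 ω) ^ 2) μ)
    (hM2 : ∫ ω, (V 0 ω) ^ 2 ∂μ < 1) :
    (∀ᵐ ω ∂μ, Summable fun l : ℕ => ∏ k ∈ Finset.range l, V k ω) ∧
      Tendsto
        (fun n => ∫ ω, ((∑ l ∈ Finset.range n, ∏ k ∈ Finset.range l, V k ω) -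
            ∑' l : ℕ, ∏ k ∈ Finset.range l, V k ω) ^ 2 ∂μ)
        atTop (nhds 0) ∧
      ∫ ω, (∑' l : ℕ, ∏ k ∈ Finset.range l, V k ω) ^ 2 ∂μ =
        2 * (∫ ω, V 0 ω ∂μ) /
            ((1 - ∫ ω, V 0 ω ∂μ) * (1 - ∫ ω, (V 0 ω) ^ 2 ∂μ)) +
          1 / (1 - ∫ ω, (V 0 ω) ^ 2 ∂μ) := by
  classical
  set P : ℕ → Ω → ℝ := fun l ω => ∏ k ∈ Finset.range l, V k ω with hPdef
  set m : ℝ := ∫ ω, V 0 ω ∂μ with hmdef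
  set s : ℝ := ∫ ω, (V 0 ω) ^ 2 ∂μ with hsdef
  set a : ℝ := ∫ ω, |V 0 ω| ∂μ with hadef
  set r : ℝ := Real.sqrt s with hrdef
  have hs0 : 0 ≤ s := integral_nonneg fun ω => sq_nonneg _
  have hs1 : s < 1 := hM2
  have hr0 : 0 ≤ r := Real.sqrt_nonneg s
  have hrs : r ^ 2 = s := Real.sq_sqrt hs0
  have hr1 : r < 1 := by nlinarith
  have hV0mem : MemLp (V 0) 2 μ :=
    (memLp_two_iff_integrable_sq (hVm 0).aestronglyMeasurable).mpr hint
  have hV0i : Integrable (V 0) μ := hV0mem.integrable (by norm_num)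
  have hV0absi : Integrable (fun ω => |V 0 ω|) μ := hV0i.abs
  have ha0 : 0 ≤ a := integral_nonneg fun ω => abs_nonneg _
  have habsmem : MemLp (fun ω => |V 0 ω|) 2 μ :=
    (memLp_two_iff_integrable_sq (hVm 0).abs.aestronglyMeasurable).mpr
      (by simpa [sq_abs] using hint)
  have has : a ^ 2 ≤ s := by
    have h1 := variance_nonneg (fun ω => |V 0 ω|) μ
    rw [variance_eq_sub habsmem] at h1
    have h2 : ∫ ω, |V 0 ω| ^ 2 ∂μ = s := by simp [hsdef, sq_abs]
    simp only [Pi.pow_apply] at h1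
    nlinarith
  have har : a ≤ r := by
    have := Real.sqrt_le_sqrt has
    rwa [Real.sqrt_sq ha0] at this
  have hma : |m| ≤ a := by
    simpa [Real.norm_eq_abs] using norm_integral_le_integral_norm (μ := μ) (f := V 0)
  have hm1 : |m| < 1 := lt_of_le_of_lt (hma.trans har) hr1
  have ha1 : a < 1 := lt_of_le_of_lt har hr1
  have hsqm : Measurable fun x : ℝ => x ^ 2 := measurable_id.pow_const 2
  have habsm : Measurable fun x : ℝ => |x| := measurable_id.abs
  have hPm : ∀ l, Measurable (P l) := fun l =>
    Finset.measurable_prod _ fun k _ => hVm k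
  -- covariance structure
  have hcov : ∀ l j, l ≤ j → Integrable (fun ω => P l ω * P j ω) μ ∧
      ∫ ω, P l ω * P j ω ∂μ = s ^ l * m ^ (j - l) := by
    intro l j hlj
    obtain ⟨h1, h2⟩ := aux_key μ V hVm hindep hident (fun x => x ^ 2) (fun x => x)
      hsqm measurable_id hint hV0i l j hlj
    have hpt : ∀ ω, (∏ k ∈ Finset.range l, (V k ω) ^ 2) *
        ∏ k ∈ Finset.Ico l j, V k ω = P l ω * P j ω := by
      intro ω
      have h3 : P j ω = P l ω * ∏ k ∈ Finset.Ico l j, V k ω :=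
        (Finset.prod_range_mul_prod_Ico _ hlj).symm
      have h4 : ∏ k ∈ Finset.range l, (V k ω) ^ 2 = (P l ω) ^ 2 := by
        rw [hPdef]; exact (Finset.prod_pow _ _ _)
      rw [h3, h4]; ring
    exact ⟨h1.congr (Filter.Eventually.of_forall hpt),
      by rw [← integral_congr_ae (Filter.Eventually.of_forall hpt), h2]⟩
  have habs : ∀ l j, l ≤ j → Integrable (fun ω => |P l ω| * |P j ω|) μ ∧
      ∫ ω, |P l ω| * |P j ω| ∂μ = s ^ l * a ^ (j - l) := by
    intro l j hlj
    obtain ⟨h1, h2⟩ := aux_key μ V hVm hindep hident (fun x => x ^ 2) (fun x => |x|)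
      hsqm habsm hint hV0absi l j hlj
    have hpt : ∀ ω, (∏ k ∈ Finset.range l, (V k ω) ^ 2) *
        ∏ k ∈ Finset.Ico l j, |V k ω| = |P l ω| * |P j ω| := by
      intro ω
      have h3 : |P j ω| = |P l ω| * ∏ k ∈ Finset.Ico l j, |V k ω| := by
        rw [hPdef]
        simp only [Finset.abs_prod]
        exact (Finset.prod_range_mul_prod_Ico _ hlj).symm
      have h4 : ∏ k ∈ Finset.range l, (V k ω) ^ 2 = |P l ω| ^ 2 := by
        rw [hPdef]
        simp only [Finset.abs_prod, ← Finset.prod_pow, sq_abs]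
      rw [h3, h4]; ring
    exact ⟨h1.congr (Filter.Eventually.of_forall hpt),
      by rw [← integral_congr_ae (Filter.Eventually.of_forall hpt), h2]⟩
  have hcov' : ∀ l j, Integrable (fun ω => P l ω * P j ω) μ ∧
      ∫ ω, P l ω * P j ω ∂μ = s ^ min l j * m ^ (max l j - min l j) := by
    intro l j
    rcases le_total l j with h | h
    · rw [min_eq_left h, max_eq_right h]; exact hcov l j h
    · obtain ⟨h1, h2⟩ := hcov j l h
      have hswap : (fun ω => P l ω * P j ω) = fun ω => P j ω * P l ω := by
        funext ω; ring
      rw [min_eq_right h, max_eq_left h, hswap]; exact ⟨h1, h2⟩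
  have habs' : ∀ l j, Integrable (fun ω => |P l ω| * |P j ω|) μ ∧
      ∫ ω, |P l ω| * |P j ω| ∂μ = s ^ min l j * a ^ (max l j - min l j) := by
    intro l j
    rcases le_total l j with h | h
    · rw [min_eq_left h, max_eq_right h]; exact habs l j h
    · obtain ⟨h1, h2⟩ := habs j l h
      have hswap : (fun ω => |P l ω| * |P j ω|) = fun ω => |P j ω| * |P l ω| := by
        funext ω; ring
      rw [min_eq_right h, max_eq_left h, hswap]; exact ⟨h1, h2⟩
  have hPint : ∀ l, Integrable (P l) μ := by
    intro l
    have h0 : (fun ω => P 0 ω * P l ω) = P l := by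
      funext ω; simp [hPdef]
    have := (hcov 0 l (Nat.zero_le l)).1
    rwa [h0] at this
  have hPabs_int : ∀ l, ∫ ω, |P l ω| ∂μ = a ^ l := by
    intro l
    have h2 := (habs 0 l (Nat.zero_le l)).2
    have h0 : (fun ω => |P 0 ω| * |P l ω|) = fun ω => |P l ω| := by
      funext ω; simp [hPdef]
    rw [h0] at h2
    simpa using h2
  have hgeo_a : Summable fun n : ℕ => a ^ n := summable_geometric_of_lt_one ha0 ha1
  -- the dominating ENNReal function
  set G : Ω → ℝ≥0∞ := fun ω => ∑' l, (‖P l ω‖₊ : ℝ≥0∞) with hGdef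
  have hGm : Measurable G :=
    Measurable.ennreal_tsum fun l => (hPm l).nnnorm.coe_nnreal_ennreal
  have hlin : ∀ l, ∫⁻ ω, (‖P l ω‖₊ : ℝ≥0∞) ∂μ = ENNReal.ofReal (a ^ l) := by
    intro l
    change ∫⁻ ω, ‖P l ω‖ₑ ∂μ = _
    rw [← ofReal_integral_norm_eq_lintegral_enorm (hPint l)]
    congr 1
    simp only [Real.norm_eq_abs]
    exact hPabs_int l
  have hGlin : ∫⁻ ω, G ω ∂μ ≠ ⊤ := by
    have h1 : ∫⁻ ω, G ω ∂μ = ∑' l, ∫⁻ ω, (‖P l ω‖₊ : ℝ≥0∞) ∂μ :=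
      lintegral_tsum fun l => ((hPm l).nnnorm.coe_nnreal_ennreal).aemeasurable
    rw [h1]
    have h2 : ∑' l, ∫⁻ ω, (‖P l ω‖₊ : ℝ≥0∞) ∂μ = ENNReal.ofReal (∑' l : ℕ, a ^ l) := by
      rw [ENNReal.ofReal_tsum_of_nonneg (fun n => pow_nonneg ha0 n) hgeo_a]
      exact tsum_congr hlin
    rw [h2]
    exact ENNReal.ofReal_ne_top
  have hGae : ∀ᵐ ω ∂μ, G ω < ⊤ := ae_lt_top hGm hGlin
  have hEsum : ∀ᵐ ω ∂μ, (Summable fun l => ‖P l ω‖) ∧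
      ∑' l, ‖P l ω‖ = (G ω).toReal := by
    filter_upwards [hGae] with ω hω
    have h1 : Summable fun l => ‖P l ω‖₊ := ENNReal.tsum_coe_ne_top_iff_summable.mp hω.ne
    have h2 : Summable fun l => ‖P l ω‖ := by
      rw [← NNReal.summable_coe] at h1
      simpa [coe_nnnorm] using h1
    refine ⟨h2, ?_⟩
    have h3 : G ω = ((∑' l, ‖P l ω‖₊ : ℝ≥0) : ℝ≥0∞) := (ENNReal.coe_tsum h1).symm
    rw [h3, ENNReal.coe_toReal, NNReal.coe_tsum]
    simp [coe_nnnorm]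
  -- goal 1
  have goal1 : ∀ᵐ ω ∂μ, Summable fun l : ℕ => P l ω := by
    filter_upwards [hEsum] with ω h
    exact h.1.of_norm
  -- bound on pairwise lintegrals
  have habs_le : ∀ l j, ∫ ω, |P l ω| * |P j ω| ∂μ ≤ r ^ (l + j) := by
    intro l j
    rw [(habs' l j).2]
    calc s ^ min l j * a ^ (max l j - min l j)
        ≤ s ^ min l j * r ^ (max l j - min l j) := by
          apply mul_le_mul_of_nonneg_left (pow_le_pow_left₀ ha0 har _)
          positivity
      _ = r ^ (2 * min l j + (max l j - min l j)) := by rw [pow_add, pow_mul, hrs]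
      _ = r ^ (l + j) := by congr 1; omega
  have hpair_lin : ∀ l j, ∫⁻ ω, (‖P l ω‖₊ : ℝ≥0∞) * (‖P j ω‖₊ : ℝ≥0∞) ∂μ ≤
      ENNReal.ofReal (r ^ (l + j)) := by
    intro l j
    have hfi := (habs' l j).1
    have heq : ∀ ω, (‖P l ω‖₊ : ℝ≥0∞) * (‖P j ω‖₊ : ℝ≥0∞) =
        (‖|P l ω| * |P j ω|‖₊ : ℝ≥0∞) := by
      intro ω
      rw [nnnorm_mul, Real.nnnorm_abs, Real.nnnorm_abs, ENNReal.coe_mul]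
    calc ∫⁻ ω, (‖P l ω‖₊ : ℝ≥0∞) * (‖P j ω‖₊ : ℝ≥0∞) ∂μ
        = ∫⁻ ω, (‖|P l ω| * |P j ω|‖₊ : ℝ≥0∞) ∂μ := lintegral_congr heq
      _ = ENNReal.ofReal (∫ ω, ‖|P l ω| * |P j ω|‖ ∂μ) :=
          (ofReal_integral_norm_eq_lintegral_enorm hfi).symm
      _ = ENNReal.ofReal (∫ ω, |P l ω| * |P j ω| ∂μ) := by
          congr 1
          apply integral_congr_ae
          filter_upwards with ω
          rw [Real.norm_eq_abs, abs_of_nonneg (by positivity)]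
      _ ≤ ENNReal.ofReal (r ^ (l + j)) := ENNReal.ofReal_le_ofReal (habs_le l j)
  have hG2fin : ∫⁻ ω, (G ω) ^ 2 ∂μ ≠ ⊤ := by
    have hGsq : ∀ ω, (G ω) ^ 2 =
        ∑' (l : ℕ) (j : ℕ), (‖P l ω‖₊ : ℝ≥0∞) * (‖P j ω‖₊ : ℝ≥0∞) := by
      intro ω
      rw [sq]
      calc G ω * G ω = ∑' (l : ℕ), (‖P l ω‖₊ : ℝ≥0∞) * G ω := ENNReal.tsum_mul_right.symm
        _ = ∑' (l : ℕ) (j : ℕ), (‖P l ω‖₊ : ℝ≥0∞) * (‖P j ω‖₊ : ℝ≥0∞) :=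
            tsum_congr fun l => ENNReal.tsum_mul_left.symm
    have hmeas : ∀ l j : ℕ, Measurable fun ω => (‖P l ω‖₊ : ℝ≥0∞) * (‖P j ω‖₊ : ℝ≥0∞) :=
      fun l j => ((hPm l).nnnorm.coe_nnreal_ennreal).mul ((hPm j).nnnorm.coe_nnreal_ennreal)
    have hfin_geo : ∑' l : ℕ, ENNReal.ofReal (r ^ l) = ENNReal.ofReal (∑' l : ℕ, r ^ l) :=
      (ENNReal.ofReal_tsum_of_nonneg (fun n => pow_nonneg hr0 n)
        (summable_geometric_of_lt_one hr0 hr1)).symm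
    have hb : ∫⁻ ω, (G ω) ^ 2 ∂μ ≤
        (∑' l : ℕ, ENNReal.ofReal (r ^ l)) * ∑' j : ℕ, ENNReal.ofReal (r ^ j) := by
      calc ∫⁻ ω, (G ω) ^ 2 ∂μ
          = ∫⁻ ω, ∑' (l : ℕ) (j : ℕ), (‖P l ω‖₊ : ℝ≥0∞) * (‖P j ω‖₊ : ℝ≥0∞) ∂μ :=
            lintegral_congr hGsq
        _ = ∑' (l : ℕ), ∫⁻ ω, ∑' (j : ℕ), (‖P l ω‖₊ : ℝ≥0∞) * (‖P j ω‖₊ : ℝ≥0∞) ∂μ :=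
            lintegral_tsum fun l =>
              (Measurable.ennreal_tsum fun j => hmeas l j).aemeasurable
        _ = ∑' (l : ℕ) (j : ℕ), ∫⁻ ω, (‖P l ω‖₊ : ℝ≥0∞) * (‖P j ω‖₊ : ℝ≥0∞) ∂μ :=
            tsum_congr fun l => lintegral_tsum fun j => (hmeas l j).aemeasurable
        _ ≤ ∑' (l : ℕ) (j : ℕ), ENNReal.ofReal (r ^ (l + j)) :=
            ENNReal.tsum_le_tsum fun l => ENNReal.tsum_le_tsum fun j => hpair_lin l j
        _ = ∑' (l : ℕ) (j : ℕ), ENNReal.ofReal (r ^ l) * ENNReal.ofReal (r ^ j) := by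
            refine tsum_congr fun l => tsum_congr fun j => ?_
            rw [pow_add, ENNReal.ofReal_mul (pow_nonneg hr0 l)]
        _ = ∑' (l : ℕ), ENNReal.ofReal (r ^ l) * ∑' j : ℕ, ENNReal.ofReal (r ^ j) :=
            tsum_congr fun l => ENNReal.tsum_mul_left
        _ = (∑' l : ℕ, ENNReal.ofReal (r ^ l)) * ∑' j : ℕ, ENNReal.ofReal (r ^ j) :=
            ENNReal.tsum_mul_right
    refine ne_top_of_le_ne_top ?_ hb
    rw [hfin_geo]
    exact ENNReal.mul_ne_top ENNReal.ofReal_ne_top ENNReal.ofReal_ne_top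
  set gdom : Ω → ℝ := fun ω => ((G ω).toReal) ^ 2 with hgdef
  have hgm : Measurable gdom := hGm.ennreal_toReal.pow_const 2
  have hgint : Integrable gdom μ := by
    refine ⟨hgm.aestronglyMeasurable, ?_⟩
    have hb : ∀ ω, (‖gdom ω‖₊ : ℝ≥0∞) ≤ (G ω) ^ 2 := by
      intro ω
      rw [show (‖gdom ω‖₊ : ℝ≥0∞) = ENNReal.ofReal ‖gdom ω‖ by
        rw [← coe_nnnorm]; exact ENNReal.ofReal_coe_nnreal.symm, Real.norm_eq_abs, abs_of_nonneg (sq_nonneg _)]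
      calc ENNReal.ofReal ((G ω).toReal ^ 2)
          = (ENNReal.ofReal ((G ω).toReal)) ^ 2 :=
            ENNReal.ofReal_pow ENNReal.toReal_nonneg 2
        _ ≤ (G ω) ^ 2 := by gcongr; exact ENNReal.ofReal_toReal_le
    exact lt_of_le_of_lt (lintegral_mono hb) hG2fin.lt_top
  have hSnm : ∀ n, Measurable fun ω => ∑ l ∈ Finset.range n, P l ω := fun n =>
    Finset.measurable_sum _ fun l _ => hPm l
  have hStend : ∀ᵐ ω ∂μ, Tendsto (fun n => ∑ l ∈ Finset.range n, P l ω) atTop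
      (nhds (∑' l, P l ω)) := by
    filter_upwards [hEsum] with ω h
    exact h.1.of_norm.hasSum.tendsto_sum_nat
  have hSmeas : AEStronglyMeasurable (fun ω => ∑' l : ℕ, P l ω) μ :=
    aestronglyMeasurable_of_tendsto_ae atTop
      (fun n => (hSnm n).aestronglyMeasurable) hStend
  -- goal 2
  have goal2 : Tendsto (fun n => ∫ ω,
      ((∑ l ∈ Finset.range n, P l ω) - ∑' l : ℕ, P l ω) ^ 2 ∂μ) atTop (nhds 0) := by
    have hFm : ∀ n : ℕ, AEStronglyMeasurable
        (fun ω => ((∑ l ∈ Finset.range n, P l ω) - ∑' l : ℕ, P l ω) ^ 2) μ := by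
      intro n
      have h := (hSnm n).aestronglyMeasurable.sub hSmeas
      exact (h.mul h).congr (Filter.Eventually.of_forall fun ω => (sq _).symm)
    have hbound : ∀ n : ℕ, ∀ᵐ ω ∂μ,
        ‖((∑ l ∈ Finset.range n, P l ω) - ∑' l : ℕ, P l ω) ^ 2‖ ≤ gdom ω := by
      intro n
      filter_upwards [hEsum] with ω h
      obtain ⟨h1, h2⟩ := h
      have hsP : Summable fun l => P l ω := h1.of_norm
      have htail := Summable.sum_add_tsum_nat_add (f := fun l => P l ω) n hsP
      have htailn := Summable.sum_add_tsum_nat_add (f := fun l => ‖P l ω‖) n h1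
      have hb1 : |(∑ l ∈ Finset.range n, P l ω) - ∑' l : ℕ, P l ω| ≤ (G ω).toReal := by
        rw [← htail]
        have he : (∑ l ∈ Finset.range n, P l ω) -
            ((∑ l ∈ Finset.range n, P l ω) + ∑' l : ℕ, P (l + n) ω) =
            -∑' l : ℕ, P (l + n) ω := by ring
        rw [he, abs_neg]
        have hsum_tail : Summable fun l => ‖P (l + n) ω‖ :=
          h1.comp_injective (add_left_injective n)
        have hle : |∑' l : ℕ, P (l + n) ω| ≤ ∑' l : ℕ, ‖P (l + n) ω‖ := by
          simpa [Real.norm_eq_abs] using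
            norm_tsum_le_tsum_norm (f := fun l => P (l + n) ω) hsum_tail
        have h4 : 0 ≤ ∑ l ∈ Finset.range n, ‖P l ω‖ :=
          Finset.sum_nonneg fun _ _ => norm_nonneg _
        have hle2 : ∑' l : ℕ, ‖P (l + n) ω‖ ≤ ∑' l : ℕ, ‖P l ω‖ := by linarith
        rw [← h2]
        linarith
      have hnn : ‖((∑ l ∈ Finset.range n, P l ω) - ∑' l : ℕ, P l ω) ^ 2‖ =
          |(∑ l ∈ Finset.range n, P l ω) - ∑' l : ℕ, P l ω| ^ 2 := by
        rw [Real.norm_eq_abs, abs_of_nonneg (sq_nonneg _), sq_abs]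
      rw [hnn]
      exact pow_le_pow_left₀ (abs_nonneg _) hb1 2
    have hlim : ∀ᵐ ω ∂μ, Tendsto
        (fun n => ((∑ l ∈ Finset.range n, P l ω) - ∑' l : ℕ, P l ω) ^ 2)
        atTop (nhds ((0 : ℝ) : ℝ)) := by
      filter_upwards [hStend] with ω h
      have h3 : Tendsto (fun n => (∑ l ∈ Finset.range n, P l ω) - ∑' l : ℕ, P l ω)
          atTop (nhds 0) := by
        simpa using h.sub (tendsto_const_nhds (x := ∑' l : ℕ, P l ω))
      simpa using h3.pow 2
    have := tendsto_integral_of_dominated_convergence gdom hFm hgint hbound hlim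
    simpa using this
  -- goal 3
  obtain ⟨hCsum, hCval⟩ := aux_tsum_value hs0 hs1 hr0 hr1 hrs (hma.trans har)
  set C : ℕ × ℕ → ℝ := fun p => s ^ min p.1 p.2 * m ^ (max p.1 p.2 - min p.1 p.2) with hCdef
  have hSn_int : ∀ n, ∫ ω, (∑ l ∈ Finset.range n, P l ω) ^ 2 ∂μ =
      ∑ p ∈ Finset.range n ×ˢ Finset.range n, C p := by
    intro n
    have hpt : ∀ ω, (∑ l ∈ Finset.range n, P l ω) ^ 2 =
        ∑ p ∈ Finset.range n ×ˢ Finset.range n, P p.1 ω * P p.2 ω := by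
      intro ω
      rw [sq, Finset.sum_mul_sum, ← Finset.sum_product']
    rw [integral_congr_ae (Filter.Eventually.of_forall hpt),
      integral_finset_sum _ fun p _ => (hcov' p.1 p.2).1]
    exact Finset.sum_congr rfl fun p _ => (hcov' p.1 p.2).2
  have hmono : Monotone fun n => Finset.range n ×ˢ Finset.range n := fun n1 n2 h =>
    Finset.product_subset_product (Finset.range_subset_range.mpr h) (Finset.range_subset_range.mpr h)
  have hexh : ∀ p : ℕ × ℕ, ∃ n, p ∈ Finset.range n ×ˢ Finset.range n := fun p =>
    ⟨max p.1 p.2 + 1, by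
      simp only [Finset.mem_product, Finset.mem_range]
      omega⟩
  have htendA : Tendsto (fun n => ∫ ω, (∑ l ∈ Finset.range n, P l ω) ^ 2 ∂μ)
      atTop (nhds (∑' p, C p)) := by
    have h := hCsum.hasSum.comp (tendsto_atTop_finset_of_monotone hmono hexh)
    apply h.congr
    intro n
    exact (hSn_int n).symm
  have htendB : Tendsto (fun n => ∫ ω, (∑ l ∈ Finset.range n, P l ω) ^ 2 ∂μ)
      atTop (nhds (∫ ω, (∑' l : ℕ, P l ω) ^ 2 ∂μ)) := by
    apply tendsto_integral_of_dominated_convergence gdom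
      (fun n => ((hSnm n).pow_const 2).aestronglyMeasurable) hgint
    · intro n
      filter_upwards [hEsum] with ω h
      have ha1' : |∑ l ∈ Finset.range n, P l ω| ≤ ∑ l ∈ Finset.range n, ‖P l ω‖ := by
        simpa [Real.norm_eq_abs] using
          Finset.abs_sum_le_sum_abs (fun l => P l ω) (Finset.range n)
      have hb1 : ∑ l ∈ Finset.range n, ‖P l ω‖ ≤ ∑' l : ℕ, ‖P l ω‖ :=
        Summable.sum_le_tsum _ (fun _ _ => norm_nonneg _) h.1
      have hnn : ‖(∑ l ∈ Finset.range n, P l ω) ^ 2‖ =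
          |∑ l ∈ Finset.range n, P l ω| ^ 2 := by
        rw [Real.norm_eq_abs, abs_of_nonneg (sq_nonneg _), sq_abs]
      rw [hnn]
      calc |∑ l ∈ Finset.range n, P l ω| ^ 2 ≤ ((G ω).toReal) ^ 2 := by
            apply pow_le_pow_left₀ (abs_nonneg _)
            rw [← h.2]
            exact ha1'.trans hb1
        _ = gdom ω := rfl
    · filter_upwards [hStend] with ω h
      exact h.pow 2
  have hint_eq : ∫ ω, (∑' l : ℕ, P l ω) ^ 2 ∂μ = ∑' p, C p :=
    tendsto_nhds_unique htendB htendA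
  exact ⟨goal1, goal2, hint_eq.trans hCval⟩
end

section
/- Let (Z_j)_{j≥1} be iid real random variables with E[Z₁²] < ∞, let β, γ, δ ∈ ℝ, and set V_j = β − 2^{−1}(γZ_j + δ|Z_j|). Assume E[V₁²] < 1 (hence |E V₁| < 1). Then the random series S = ∑_{l=1}^∞ |Z_l| ∏_{k=1}^{l−1} V_k (empty product equal to 1) converges in L² and E[S²] = 2 E[|Z₁|] · E[|Z₁|V₁] / ((1 − E V₁)(1 − E V₁²)) + E[Z₁²]/(1 − E V₁²). -/
open MeasureTheory ProbabilityTheory Filter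

section AuxLemmas

variable {Ω : Type*} [MeasurableSpace Ω] {μ : Measure Ω}

private lemma aux_prod_indep [IsProbabilityMeasure μ]
    {f : ℕ → Ω → ℝ} (hindep : iIndepFun f μ)
    (hm : ∀ i, Measurable (f i)) (hi : ∀ i, Integrable (f i) μ) (n : ℕ) :
    Integrable (fun ω => ∏ k ∈ Finset.range n, f k ω) μ ∧
      ∫ ω, ∏ k ∈ Finset.range n, f k ω ∂μ = ∏ k ∈ Finset.range n, ∫ ω, f k ω ∂μ := by
  induction n with
  | zero => simp
  | succ n ih =>
    have hind := hindep.indepFun_prod_range_succ hm n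
    have hfn : (∏ k ∈ Finset.range n, f k) = fun ω => ∏ k ∈ Finset.range n, f k ω := by
      funext ω; simp [Finset.prod_apply]
    have h1 : (fun ω => ∏ k ∈ Finset.range (n+1), f k ω)
        = (∏ k ∈ Finset.range n, f k) * f n := by
      funext ω
      simp [Finset.prod_range_succ, Finset.prod_apply]
    have hP : Integrable (∏ k ∈ Finset.range n, f k) μ := by rw [hfn]; exact ih.1
    constructor
    · rw [h1]
      exact hind.integrable_mul hP (hi n)
    · rw [h1, hind.integral_mul_eq_mul_integral hP.aestronglyMeasurable (hi n).aestronglyMeasurable, Finset.prod_range_succ, ← ih.2]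
      congr 1
      rw [hfn]

private lemma aux_square_sum (E : ℕ → ℕ → ℝ) (n : ℕ) :
    ∑ l ∈ Finset.range n, ∑ l' ∈ Finset.range n, E l l' =
      ∑ l ∈ Finset.range n, E l l +
        ∑ l ∈ Finset.range n, ∑ l' ∈ Finset.range l, (E l l' + E l' l) := by
  induction n with
  | zero => simp
  | succ n ih =>
    rw [Finset.sum_range_succ]
    have h1 : ∀ l, ∑ l' ∈ Finset.range (n+1), E l l'
        = ∑ l' ∈ Finset.range n, E l l' + E l n := fun l => Finset.sum_range_succ _ _
    simp only [h1]
    rw [Finset.sum_add_distrib, ih]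
    rw [Finset.sum_range_succ (fun l => E l l), Finset.sum_range_succ
      (fun l => ∑ l' ∈ Finset.range l, (E l l' + E l' l))]
    rw [Finset.sum_add_distrib]
    ring

private lemma aux_tri_swap (f : ℕ → ℕ → ℝ) (n : ℕ) :
    ∑ l ∈ Finset.range n, ∑ l' ∈ Finset.range l, f l l' =
      ∑ l' ∈ Finset.range n, ∑ l ∈ Finset.Ico (l'+1) n, f l l' := by
  induction n with
  | zero => simp
  | succ n ih =>
    rw [Finset.sum_range_succ, ih, Finset.sum_range_succ]
    have h2 : ∀ l' ∈ Finset.range n, ∑ l ∈ Finset.Ico (l'+1) (n+1), f l l'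
        = ∑ l ∈ Finset.Ico (l'+1) n, f l l' + f n l' := by
      intro l' hl'
      rw [Finset.sum_Ico_succ_top]
      exact Nat.succ_le_of_lt (Finset.mem_range.mp hl')
    rw [Finset.sum_congr rfl h2, Finset.sum_add_distrib]
    simp

private lemma aux_R_tendsto {m1 m2 : ℝ} (h1 : |m1| < 1) (h2 : |m2| < 1) :
    Tendsto (fun n => ∑ l ∈ Finset.range n, m2 ^ l * m1 ^ (n - l - 1)) atTop (nhds 0) := by
  set r := max |m1| |m2| with hr
  have hr0 : 0 ≤ r := le_trans (abs_nonneg _) (le_max_left _ _)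
  have hr1 : r < 1 := max_lt h1 h2
  have hbound : ∀ n, |∑ l ∈ Finset.range n, m2 ^ l * m1 ^ (n - l - 1)| ≤ n * r ^ (n-1) := by
    intro n
    calc |∑ l ∈ Finset.range n, m2 ^ l * m1 ^ (n - l - 1)|
        ≤ ∑ l ∈ Finset.range n, |m2 ^ l * m1 ^ (n - l - 1)| := Finset.abs_sum_le_sum_abs _ _
      _ ≤ ∑ l ∈ Finset.range n, r ^ (n-1) := by
          apply Finset.sum_le_sum
          intro l hl
          have hl' : l ≤ n - 1 := Nat.le_sub_one_of_lt (Finset.mem_range.mp hl)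
          rw [abs_mul, abs_pow, abs_pow]
          calc |m2| ^ l * |m1| ^ (n - l - 1) ≤ r ^ l * r ^ (n - l - 1) := by
                apply mul_le_mul (pow_le_pow_left₀ (abs_nonneg _) (le_max_right _ _) l)
                  (pow_le_pow_left₀ (abs_nonneg _) (le_max_left _ _) _)
                  (pow_nonneg (abs_nonneg _) _) (pow_nonneg hr0 _)
            _ = r ^ (l + (n - l - 1)) := (pow_add r l _).symm
            _ = r ^ (n - 1) := by
                congr 1
                omega
      _ = n * r ^ (n-1) := by rw [Finset.sum_const, Finset.card_range, nsmul_eq_mul]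
  apply squeeze_zero_norm hbound
  have hsum : Summable (fun n : ℕ => ((n:ℝ)+1) * r ^ n) := by
    have h := summable_pow_mul_geometric_of_norm_lt_one 1
      (r := r) (by rwa [Real.norm_eq_abs, abs_of_nonneg hr0])
    simpa [add_mul, pow_one] using h.add (summable_geometric_of_lt_one hr0 hr1)
  have htend : Tendsto (fun n : ℕ => ((n:ℝ)+1) * r ^ n) atTop (nhds 0) := hsum.tendsto_atTop_zero
  have : Tendsto (fun n : ℕ => ((n:ℝ)+1) * r ^ n) atTop (nhds 0) →
      Tendsto (fun n : ℕ => (n:ℝ) * r ^ (n-1)) atTop (nhds 0) := by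
    intro h
    rw [← tendsto_add_atTop_iff_nat 1]
    simpa using h
  exact this htend

private lemma aux_main_tendsto {m1 m2 q a c : ℝ} (h1 : |m1| < 1) (h2 : |m2| < 1)
    (E : ℕ → ℕ → ℝ) (hdiag : ∀ l, E l l = m2 ^ l * q)
    (hoff : ∀ l l', l < l' → E l l' = m2 ^ l * c * m1 ^ (l' - l - 1) * a)
    (hsymm : ∀ l l', E l l' = E l' l) :
    Tendsto (fun n => ∑ l ∈ Finset.range n, ∑ l' ∈ Finset.range n, E l l') atTop
      (nhds (2 * a * c / ((1 - m1) * (1 - m2)) + q / (1 - m2))) := by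
  have hm1ne : (1:ℝ) - m1 ≠ 0 := by
    have := abs_lt.mp h1; intro h; linarith [this.2]
  have hm2ne : (1:ℝ) - m2 ≠ 0 := by
    have := abs_lt.mp h2; intro h; linarith [(abs_lt.mp h2).2]
  have hstep : ∀ n, ∑ l ∈ Finset.range n, ∑ l' ∈ Finset.range n, E l l' =
      q * ∑ l ∈ Finset.range n, m2 ^ l +
        2 * c * a * ((∑ l ∈ Finset.range n, m2 ^ l
          - ∑ l ∈ Finset.range n, m2 ^ l * m1 ^ (n - l - 1)) / (1 - m1)) := by
    intro n
    rw [aux_square_sum]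
    congr 1
    · rw [Finset.mul_sum]
      exact Finset.sum_congr rfl fun l _ => by rw [hdiag l]; ring
    · have hoff' : ∀ l l', l' < l →
          E l l' + E l' l = 2 * (m2 ^ l' * c * m1 ^ (l - l' - 1) * a) := by
        intro l l' hl
        rw [hsymm l l', hoff l' l hl]; ring
      have : ∑ l ∈ Finset.range n, ∑ l' ∈ Finset.range l, (E l l' + E l' l)
          = 2 * c * a * ∑ l ∈ Finset.range n, ∑ l' ∈ Finset.range l,
              m2 ^ l' * m1 ^ (l - l' - 1) := by
        rw [Finset.mul_sum]
        refine Finset.sum_congr rfl fun l _ => ?_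
        rw [Finset.mul_sum]
        refine Finset.sum_congr rfl fun l' hl' => ?_
        rw [hoff' l l' (Finset.mem_range.mp hl')]; ring
      rw [this]
      congr 1
      rw [aux_tri_swap]
      have hinner : ∀ l' , l' < n → ∑ l ∈ Finset.Ico (l'+1) n, m2 ^ l' * m1 ^ (l - l' - 1)
          = m2 ^ l' * ((1 - m1 ^ (n - l' - 1)) / (1 - m1)) := by
        intro l' hl'
        rw [Finset.sum_Ico_eq_sum_range]
        have : ∀ j, m2 ^ l' * m1 ^ (l' + 1 + j - l' - 1) = m2 ^ l' * m1 ^ j := by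
          intro j; congr 2; omega
        rw [Finset.sum_congr rfl fun j _ => this j, ← Finset.mul_sum]
        congr 1
        have hne : m1 ≠ 1 := by intro hh; rw [hh] at h1; simp at h1
        rw [geom_sum_eq hne, n.sub_sub l' 1, div_eq_div_iff (sub_ne_zero.mpr hne) hm1ne]
        ring
      rw [Finset.sum_congr rfl fun l' hl' => hinner l' (Finset.mem_range.mp hl')]
      have hrw : ∀ l' : ℕ, m2 ^ l' * ((1 - m1 ^ (n - l' - 1)) / (1 - m1))
          = (m2 ^ l' - m2 ^ l' * m1 ^ (n - l' - 1)) / (1 - m1) := by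
        intro l'; field_simp
      simp only [hrw]
      rw [← Finset.sum_div, Finset.sum_sub_distrib]
  simp only [hstep]
  have hD : Tendsto (fun n => ∑ l ∈ Finset.range n, m2 ^ l) atTop (nhds (1 - m2)⁻¹) :=
    (hasSum_geometric_of_abs_lt_one h2).tendsto_sum_nat
  have hR := aux_R_tendsto h1 h2
  have hlim : Tendsto (fun n => q * ∑ l ∈ Finset.range n, m2 ^ l +
        2 * c * a * ((∑ l ∈ Finset.range n, m2 ^ l
          - ∑ l ∈ Finset.range n, m2 ^ l * m1 ^ (n - l - 1)) / (1 - m1))) atTop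
      (nhds (q * (1-m2)⁻¹ + 2 * c * a * (((1-m2)⁻¹ - 0) / (1-m1)))) :=
    (hD.const_mul q).add (((hD.sub hR).div_const (1-m1)).const_mul (2*c*a))
  convert hlim using 2
  field_simp
  ring

private lemma aux_int_mul [IsProbabilityMeasure μ] {f g : Ω → ℝ}
    (hf : MemLp f 2 μ) (hg : MemLp g 2 μ) :
    Integrable (fun ω => f ω * g ω) μ := by
  have hi : Integrable (fun ω => (f ω ^ 2 + g ω ^ 2) / 2) μ :=
    (hf.integrable_sq.add hg.integrable_sq).div_const 2
  refine Integrable.mono' hi (hf.aestronglyMeasurable.mul hg.aestronglyMeasurable) ?_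
  filter_upwards with ω
  rw [Real.norm_eq_abs, abs_mul]
  nlinarith [sq_nonneg (|f ω| - |g ω|), abs_nonneg (f ω), abs_nonneg (g ω),
    sq_abs (f ω), sq_abs (g ω)]

private lemma aux_norm_sq (φ : Lp ℝ 2 μ) {g : Ω → ℝ} (hg : (↑↑φ : Ω → ℝ) =ᵐ[μ] g) :
    ‖φ‖ ^ 2 = ∫ ω, g ω ^ 2 ∂μ := by
  have h1 : (inner ℝ φ φ : ℝ) = ∫ ω, (↑↑φ : Ω → ℝ) ω * (↑↑φ : Ω → ℝ) ω ∂μ := by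
    rw [MeasureTheory.L2.inner_def]
    simp [RCLike.inner_apply, ← sq]
  rw [← real_inner_self_eq_norm_sq, h1]
  refine integral_congr_ae ?_
  filter_upwards [hg] with ω hω
  rw [hω]; ring

private lemma aux_ae_summable {W : ℕ → Ω → ℝ}
    (hint : ∀ l, Integrable (W l) μ) {b : ℕ → ℝ} (hb : ∀ l, ∫ ω, |W l ω| ∂μ ≤ b l)
    (hbs : Summable b) : ∀ᵐ ω ∂μ, Summable (fun l => W l ω) := by
  have key : ∫⁻ ω, ∑' l, (‖W l ω‖₊ : ENNReal) ∂μ < ⊤ := by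
    rw [lintegral_tsum (f := fun l ω => (‖W l ω‖₊ : ENNReal)) (fun l => ((hint l).aemeasurable.enorm : AEMeasurable (fun ω => (‖W l ω‖₊ : ENNReal)) μ))]
    have hle : ∀ l, ∫⁻ ω, (‖W l ω‖₊ : ENNReal) ∂μ ≤ ENNReal.ofReal (b l) := by
      intro l
      change ∫⁻ ω, ‖W l ω‖ₑ ∂μ ≤ _
      rw [← ofReal_integral_norm_eq_lintegral_enorm (hint l)]
      exact ENNReal.ofReal_le_ofReal (le_trans (le_of_eq (by simp [Real.norm_eq_abs])) (hb l))
    calc ∑' l, ∫⁻ ω, (‖W l ω‖₊ : ENNReal) ∂μ ≤ ∑' l, ENNReal.ofReal (b l) :=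
          ENNReal.tsum_le_tsum hle
      _ < ⊤ := by
          have hb0 : ∀ l, 0 ≤ b l := fun l =>
            le_trans (integral_nonneg fun ω => abs_nonneg _) (hb l)
          rw [← ENNReal.ofReal_tsum_of_nonneg hb0 hbs]
          exact ENNReal.ofReal_lt_top
  have hae : ∀ᵐ ω ∂μ, ∑' l, (‖W l ω‖₊ : ENNReal) < ⊤ :=
    ae_lt_top' (AEMeasurable.ennreal_tsum fun l => ((hint l).aemeasurable.enorm : AEMeasurable (fun ω => (‖W l ω‖₊ : ENNReal)) μ)) key.ne
  filter_upwards [hae] with ω hω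
  have h1 : Summable (fun l => ‖W l ω‖₊) := ENNReal.tsum_coe_ne_top_iff_summable.mp hω.ne
  have h2 : Summable (fun l => ‖W l ω‖) := by
    simpa [← NNReal.summable_coe] using h1
  exact h2.of_norm

private lemma aux_sq_integral [IsProbabilityMeasure μ] {X : Ω → ℝ} (hX : Integrable X μ)
    (hX2 : Integrable (fun ω => X ω ^ 2) μ) :
    (∫ ω, X ω ∂μ) ^ 2 ≤ ∫ ω, X ω ^ 2 ∂μ := by
  set m := ∫ ω, X ω ∂μ with hm
  have h0 : 0 ≤ ∫ ω, (X ω - m) ^ 2 ∂μ := integral_nonneg fun ω => sq_nonneg _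
  have hexp : (fun ω => (X ω - m) ^ 2) = fun ω => (X ω ^ 2 - (2*m) * X ω) + m ^ 2 :=
    funext fun ω => by ring
  have hI1 : Integrable (fun ω => X ω ^ 2 - 2 * m * X ω) μ := hX2.sub (hX.const_mul (2*m))
  rw [hexp, integral_add hI1 (integrable_const _),
    integral_sub hX2 (hX.const_mul (2*m)), integral_const_mul, integral_const] at h0
  simp only [measure_univ, probReal_univ, ENNReal.toReal_one, smul_eq_mul, one_mul] at h0
  nlinarith [h0]

private lemma aux_coeFn_sum (φ : ℕ → Lp ℝ 2 μ) (n : ℕ) :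
    (↑↑(∑ l ∈ Finset.range n, φ l) : Ω → ℝ) =ᵐ[μ]
      fun ω => ∑ l ∈ Finset.range n, (↑↑(φ l) : Ω → ℝ) ω := by
  induction n with
  | zero =>
    simp only [Finset.range_zero, Finset.sum_empty]
    exact Lp.coeFn_zero _ _ _
  | succ n ih =>
    rw [Finset.sum_range_succ]
    filter_upwards [Lp.coeFn_add (∑ l ∈ Finset.range n, φ l) (φ n), ih] with ω h1 h2
    simp only [Finset.sum_range_succ, h1, Pi.add_apply, h2]

end AuxLemmas

/-- Let `(Z_j)` be iid with `E[Z₁²] < ∞`, and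
`V_j = β − (γ Z_j + δ|Z_j|)/2` with `E[V₁²] < 1` (hence `|E V₁| < 1`). Then
`S = ∑_{l≥1} |Z_l| ∏_{k=1}^{l−1} V_k` converges in `L²` and
`E[S²] = 2 E|Z₁| E[|Z₁|V₁]/((1 − E V₁)(1 − E V₁²)) + E[Z₁²]/(1 − E V₁²)`. -/
theorem egarch_gradient_series_B44
    {Ω : Type*} [MeasurableSpace Ω] (μ : Measure Ω) [IsProbabilityMeasure μ]
    (Z : ℕ → Ω → ℝ) (hZm : ∀ j, Measurable (Z j))
    (hindep : iIndepFun Z μ)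
    (hident : ∀ j, Measure.map (Z j) μ = Measure.map (Z 0) μ)
    (hint : Integrable (fun ω => (Z 0 ω) ^ 2) μ)
    (β γ δ : ℝ)
    (hM2 : ∫ ω, (β - (γ * Z 0 ω + δ * |Z 0 ω|) / 2) ^ 2 ∂μ < 1) :
    Tendsto
      (fun n => ∫ ω,
        ((∑ l ∈ Finset.range n,
            |Z l ω| * ∏ k ∈ Finset.range l, (β - (γ * Z k ω + δ * |Z k ω|) / 2)) -
          ∑' l : ℕ,
            |Z l ω| * ∏ k ∈ Finset.range l, (β - (γ * Z k ω + δ * |Z k ω|) / 2)) ^ 2 ∂μ)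
      atTop (nhds 0) ∧
    ∫ ω, (∑' l : ℕ,
        |Z l ω| * ∏ k ∈ Finset.range l, (β - (γ * Z k ω + δ * |Z k ω|) / 2)) ^ 2 ∂μ =
      2 * (∫ ω, |Z 0 ω| ∂μ) * (∫ ω, |Z 0 ω| * (β - (γ * Z 0 ω + δ * |Z 0 ω|) / 2) ∂μ) /
          ((1 - ∫ ω, (β - (γ * Z 0 ω + δ * |Z 0 ω|) / 2) ∂μ) *
            (1 - ∫ ω, (β - (γ * Z 0 ω + δ * |Z 0 ω|) / 2) ^ 2 ∂μ)) +
        (∫ ω, (Z 0 ω) ^ 2 ∂μ) /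
          (1 - ∫ ω, (β - (γ * Z 0 ω + δ * |Z 0 ω|) / 2) ^ 2 ∂μ) := by
  classical
  set f : ℝ → ℝ := fun x => β - (γ * x + δ * |x|) / 2 with hfdef
  have hfm : Measurable f := by
    apply Measurable.sub measurable_const
    exact ((measurable_id.const_mul γ).add (measurable_abs.const_mul δ)).div_const 2
  have hgoal : ∀ (k : ℕ) (ω : Ω), β - (γ * Z k ω + δ * |Z k ω|) / 2 = f (Z k ω) :=
    fun _ _ => rfl
  simp only [hgoal] at hM2 ⊢
  -- basic integrability
  have hmemZ : MemLp (Z 0) 2 μ :=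
    (memLp_two_iff_integrable_sq (hZm 0).aestronglyMeasurable).mpr hint
  have hmemA : MemLp (fun ω => |Z 0 ω|) 2 μ := hmemZ.abs
  have hmemV : MemLp (fun ω => f (Z 0 ω)) 2 μ := by
    have heq : (fun ω => f (Z 0 ω))
        = fun ω => β - (1/2 : ℝ) * (γ * Z 0 ω + δ * |Z 0 ω|) := by
      funext ω; rw [hfdef]; ring
    rw [heq]
    have h1 : MemLp (fun ω => γ * Z 0 ω + δ * |Z 0 ω|) 2 μ :=
      (hmemZ.const_mul γ).add (hmemA.const_mul δ)
    have h2 : MemLp (fun ω => (1/2 : ℝ) * (γ * Z 0 ω + δ * |Z 0 ω|)) 2 μ := h1.const_mul _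
    exact (memLp_const β).sub h2
  have hVint : Integrable (fun ω => f (Z 0 ω)) μ := hmemV.integrable one_le_two
  have hV2int : Integrable (fun ω => f (Z 0 ω) ^ 2) μ := hmemV.integrable_sq
  have hAint : Integrable (fun ω => |Z 0 ω|) μ := hmemA.integrable one_le_two
  have hAVint : Integrable (fun ω => |Z 0 ω| * f (Z 0 ω)) μ := aux_int_mul hmemA hmemV
  have hVabsint : Integrable (fun ω => |f (Z 0 ω)|) μ := hVint.abs
  -- constants
  set q := ∫ ω, Z 0 ω ^ 2 ∂μ with hq
  set a := ∫ ω, |Z 0 ω| ∂μ with ha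
  set c := ∫ ω, |Z 0 ω| * f (Z 0 ω) ∂μ with hc
  set m1 := ∫ ω, f (Z 0 ω) ∂μ with hm1
  set m2 := ∫ ω, f (Z 0 ω) ^ 2 ∂μ with hm2
  set b := ∫ ω, |f (Z 0 ω)| ∂μ with hb
  have hm2nonneg : 0 ≤ m2 := integral_nonneg fun ω => sq_nonneg _
  have hm2abs : |m2| < 1 := abs_lt.mpr ⟨by linarith, hM2⟩
  have hm1sq : m1 ^ 2 ≤ m2 := aux_sq_integral hVint hV2int
  have hm1abs : |m1| < 1 := by
    rw [← sq_lt_one_iff_abs_lt_one]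
    exact lt_of_le_of_lt hm1sq hM2
  have hVabs2 : Integrable (fun ω => |f (Z 0 ω)| ^ 2) μ := by
    refine hV2int.congr ?_
    filter_upwards with ω
    rw [sq_abs]
  have hbsq : b ^ 2 ≤ m2 := by
    have h := aux_sq_integral hVabsint hVabs2
    have h2 : ∫ ω, |f (Z 0 ω)| ^ 2 ∂μ = m2 := by
      rw [hm2]
      exact integral_congr_ae (by filter_upwards with ω; rw [sq_abs])
    rw [h2] at h
    exact h
  have hb0 : 0 ≤ b := integral_nonneg fun ω => abs_nonneg _
  have hblt : b < 1 := by
    have : |b| < 1 := by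
      rw [← sq_lt_one_iff_abs_lt_one]
      exact lt_of_le_of_lt hbsq hM2
    exact lt_of_le_of_lt (le_abs_self b) this
  -- transfer lemmas
  have htrans_eq : ∀ (g : ℝ → ℝ), Measurable g → ∀ j,
      ∫ ω, g (Z j ω) ∂μ = ∫ ω, g (Z 0 ω) ∂μ := by
    intro g hg j
    rw [← integral_map (hZm j).aemeasurable hg.aestronglyMeasurable, hident j,
      integral_map (hZm 0).aemeasurable hg.aestronglyMeasurable]
  have htrans_int : ∀ (g : ℝ → ℝ), Measurable g → Integrable (fun ω => g (Z 0 ω)) μ →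
      ∀ j, Integrable (fun ω => g (Z j ω)) μ := by
    intro g hg h0 j
    have h1 : Integrable (g ∘ Z j) μ := by
      rw [← integrable_map_measure hg.aestronglyMeasurable (hZm j).aemeasurable, hident j,
        integrable_map_measure hg.aestronglyMeasurable (hZm 0).aemeasurable]
      exact h0
    exact h1
  -- the independence/product machine
  have key : ∀ (G : ℕ → ℝ → ℝ), (∀ k, Measurable (G k)) →
      (∀ k, Integrable (fun ω => G k (Z 0 ω)) μ) → ∀ n,
      Integrable (fun ω => ∏ k ∈ Finset.range n, G k (Z k ω)) μ ∧
        ∫ ω, ∏ k ∈ Finset.range n, G k (Z k ω) ∂μ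
          = ∏ k ∈ Finset.range n, ∫ ω, G k (Z 0 ω) ∂μ := by
    intro G hGm hGi n
    have hcomp : iIndepFun (fun i => G i ∘ Z i) μ :=
      hindep.comp G hGm
    have h := aux_prod_indep hcomp (fun i => (hGm i).comp (hZm i))
      (fun i => htrans_int (G i) (hGm i) (hGi i) i) n
    exact ⟨h.1, h.2.trans (Finset.prod_congr rfl fun k _ => htrans_eq (G k) (hGm k) k)⟩
  -- W
  set W : ℕ → Ω → ℝ := fun l ω => |Z l ω| * ∏ k ∈ Finset.range l, f (Z k ω) with hWdef
  have hWm : ∀ l, Measurable (W l) := by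
    intro l
    rw [hWdef]
    exact (hZm l).abs.mul (Finset.measurable_prod _ fun k _ => hfm.comp (hZm k))
  -- diagonal second moments
  have hdiag : ∀ l, Integrable (fun ω => W l ω * W l ω) μ ∧
      ∫ ω, W l ω * W l ω ∂μ = m2 ^ l * q := by
    intro l
    set G : ℕ → ℝ → ℝ := fun k => if k < l then (fun x => f x ^ 2) else (fun x => x ^ 2)
      with hGdef
    have hGm : ∀ k, Measurable (G k) := by
      intro k
      simp only [hGdef]
      split_ifs
      · exact hfm.pow_const 2
      · exact measurable_id.pow_const 2
    have hGi : ∀ k, Integrable (fun ω => G k (Z 0 ω)) μ := by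
      intro k
      simp only [hGdef]
      split_ifs
      · exact hV2int
      · exact hint
    obtain ⟨hI, hEq⟩ := key G hGm hGi (l+1)
    have hpt : ∀ ω, ∏ k ∈ Finset.range (l+1), G k (Z k ω) = W l ω * W l ω := by
      intro ω
      rw [Finset.prod_range_succ]
      have h1 : ∀ k ∈ Finset.range l, G k (Z k ω) = f (Z k ω) ^ 2 := by
        intro k hk
        simp only [hGdef]
        rw [if_pos (Finset.mem_range.mp hk)]
      have h2 : G l (Z l ω) = Z l ω ^ 2 := by
        simp only [hGdef]
        rw [if_neg (lt_irrefl l)]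
      rw [Finset.prod_congr rfl h1, Finset.prod_pow, h2]
      simp only [hWdef]
      rw [← sq_abs (Z l ω)]
      ring
    constructor
    · exact hI.congr (by filter_upwards with ω; exact hpt ω)
    · have h4 : ∫ ω, W l ω * W l ω ∂μ = ∫ ω, ∏ k ∈ Finset.range (l+1), G k (Z k ω) ∂μ :=
        integral_congr_ae (by filter_upwards with ω; exact (hpt ω).symm)
      rw [h4, hEq, Finset.prod_range_succ]
      have h5 : ∀ k ∈ Finset.range l, ∫ ω, G k (Z 0 ω) ∂μ = m2 := by
        intro k hk
        simp only [hGdef]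
        rw [if_pos (Finset.mem_range.mp hk)]
      have h6 : ∫ ω, G l (Z 0 ω) ∂μ = q := by
        simp only [hGdef]
        rw [if_neg (lt_irrefl l)]
      rw [Finset.prod_congr rfl h5, Finset.prod_const, Finset.card_range, h6]
  have hWmem : ∀ l, MemLp (W l) 2 μ := by
    intro l
    refine (memLp_two_iff_integrable_sq (hWm l).aestronglyMeasurable).mpr ?_
    refine (hdiag l).1.congr ?_
    filter_upwards with ω
    rw [sq]
  have hWWint : ∀ l l', Integrable (fun ω => W l ω * W l' ω) μ :=
    fun l l' => aux_int_mul (hWmem l) (hWmem l')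
  -- off-diagonal
  have hoffd : ∀ l d, ∫ ω, W l ω * W (l + d + 1) ω ∂μ = m2 ^ l * c * m1 ^ d * a := by
    intro l d
    set G : ℕ → ℝ → ℝ := fun k =>
      if k < l then (fun x => f x ^ 2) else if k = l then (fun x => |x| * f x)
      else if k < l + d + 1 then f else (fun x => |x|) with hGdef
    have hGm : ∀ k, Measurable (G k) := by
      intro k
      simp only [hGdef]
      split_ifs
      · exact hfm.pow_const 2
      · exact measurable_abs.mul hfm
      · exact hfm
      · exact measurable_abs
    have hGi : ∀ k, Integrable (fun ω => G k (Z 0 ω)) μ := by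
      intro k
      simp only [hGdef]
      split_ifs
      · exact hV2int
      · exact hAVint
      · exact hVint
      · exact hAint
    obtain ⟨hI, hEq⟩ := key G hGm hGi (l+d+2)
    have hpt : ∀ ω, ∏ k ∈ Finset.range (l+d+2), G k (Z k ω) = W l ω * W (l+d+1) ω := by
      intro ω
      rw [show l + d + 2 = l + (d + 2) from by omega, Finset.prod_range_add]
      have h1 : ∀ k ∈ Finset.range l, G k (Z k ω) = f (Z k ω) ^ 2 := by
        intro k hk
        simp only [hGdef]
        rw [if_pos (Finset.mem_range.mp hk)]
      rw [Finset.prod_congr rfl h1, Finset.prod_pow]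
      rw [show d + 2 = (d+1)+1 from rfl, Finset.prod_range_succ, Finset.prod_range_succ']
      have h2 : ∀ j ∈ Finset.range d, G (l + (j+1)) (Z (l + (j+1)) ω) = f (Z (l + (j+1)) ω) := by
        intro j hj
        have hj' : j < d := Finset.mem_range.mp hj
        simp only [hGdef]
        rw [if_neg (by omega), if_neg (by omega), if_pos (by omega)]
      rw [Finset.prod_congr rfl h2]
      have h3 : G (l + 0) (Z (l + 0) ω) = |Z (l+0) ω| * f (Z (l+0) ω) := by
        simp only [hGdef]
        rw [if_neg (by omega), if_pos (by omega)]
      have h4 : G (l + (d+1)) (Z (l + (d+1)) ω) = |Z (l + (d+1)) ω| := by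
        simp only [hGdef]
        rw [if_neg (by omega), if_neg (by omega), if_neg (by omega)]
      rw [h3, h4]
      simp only [hWdef]
      rw [show l + d + 1 = l + (d + 1) from by omega, Finset.prod_range_add,
        Finset.prod_range_succ']
      simp only [Nat.add_zero]
      ring
    have h7 : ∫ ω, W l ω * W (l+d+1) ω ∂μ
        = ∫ ω, ∏ k ∈ Finset.range (l+d+2), G k (Z k ω) ∂μ :=
      integral_congr_ae (by filter_upwards with ω; exact (hpt ω).symm)
    rw [h7, hEq]
    rw [show l + d + 2 = l + (d + 2) from by omega, Finset.prod_range_add]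
    have h8 : ∀ k ∈ Finset.range l, ∫ ω, G k (Z 0 ω) ∂μ = m2 := by
      intro k hk
      simp only [hGdef]
      rw [if_pos (Finset.mem_range.mp hk)]
    rw [Finset.prod_congr rfl h8, Finset.prod_const, Finset.card_range]
    rw [show d + 2 = (d+1)+1 from rfl, Finset.prod_range_succ, Finset.prod_range_succ']
    have h9 : ∀ j ∈ Finset.range d, ∫ ω, G (l+(j+1)) (Z 0 ω) ∂μ = m1 := by
      intro j hj
      have hj' : j < d := Finset.mem_range.mp hj
      simp only [hGdef]
      rw [if_neg (by omega), if_neg (by omega), if_pos (by omega)]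
    rw [Finset.prod_congr rfl h9, Finset.prod_const, Finset.card_range]
    have h10 : ∫ ω, G (l+0) (Z 0 ω) ∂μ = c := by
      simp only [hGdef]
      rw [if_neg (by omega), if_pos (by omega)]
    have h11 : ∫ ω, G (l+(d+1)) (Z 0 ω) ∂μ = a := by
      simp only [hGdef]
      rw [if_neg (by omega), if_neg (by omega), if_neg (by omega)]
    rw [h10, h11]
    ring
  -- first absolute moments
  have habs : ∀ l, ∫ ω, |W l ω| ∂μ = a * b ^ l := by
    intro l
    set G : ℕ → ℝ → ℝ := fun k => if k < l then (fun x => |f x|) else (fun x => |x|)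
      with hGdef
    have hGm : ∀ k, Measurable (G k) := by
      intro k; simp only [hGdef]; split_ifs
      · exact hfm.abs
      · exact measurable_abs
    have hGi : ∀ k, Integrable (fun ω => G k (Z 0 ω)) μ := by
      intro k; simp only [hGdef]; split_ifs
      · exact hVabsint
      · exact hAint
    obtain ⟨hI, hEq⟩ := key G hGm hGi (l+1)
    have hpt : ∀ ω, ∏ k ∈ Finset.range (l+1), G k (Z k ω) = |W l ω| := by
      intro ω
      rw [Finset.prod_range_succ]
      have h1 : ∀ k ∈ Finset.range l, G k (Z k ω) = |f (Z k ω)| := by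
        intro k hk; simp only [hGdef]; rw [if_pos (Finset.mem_range.mp hk)]
      have h2 : G l (Z l ω) = |Z l ω| := by
        simp only [hGdef]; rw [if_neg (lt_irrefl l)]
      have h3 : |W l ω| = |Z l ω| * ∏ k ∈ Finset.range l, |f (Z k ω)| := by
        simp only [hWdef]
        rw [abs_mul, abs_abs, Finset.abs_prod]
      rw [Finset.prod_congr rfl h1, h2, h3]
      ring
    have h4 : ∫ ω, |W l ω| ∂μ = ∫ ω, ∏ k ∈ Finset.range (l+1), G k (Z k ω) ∂μ :=
      integral_congr_ae (by filter_upwards with ω; exact (hpt ω).symm)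
    rw [h4, hEq, Finset.prod_range_succ]
    have h5 : ∀ k ∈ Finset.range l, ∫ ω, G k (Z 0 ω) ∂μ = b := by
      intro k hk; simp only [hGdef]; rw [if_pos (Finset.mem_range.mp hk)]
    have h6 : ∫ ω, G l (Z 0 ω) ∂μ = a := by
      simp only [hGdef]; rw [if_neg (lt_irrefl l)]
    rw [Finset.prod_congr rfl h5, Finset.prod_const, Finset.card_range, h6]
    ring
  -- covariance function
  set E : ℕ → ℕ → ℝ := fun l l' => ∫ ω, W l ω * W l' ω ∂μ with hEdef
  have hEsymm : ∀ l l', E l l' = E l' l := by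
    intro l l'
    rw [hEdef]
    exact integral_congr_ae (by filter_upwards with ω; rw [mul_comm])
  have hEdiag : ∀ l, E l l = m2 ^ l * q := fun l => (hdiag l).2
  have hEoff : ∀ l l', l < l' → E l l' = m2 ^ l * c * m1 ^ (l' - l - 1) * a := by
    intro l l' hll
    obtain ⟨d, rfl⟩ : ∃ d, l' = l + d + 1 := ⟨l' - l - 1, by omega⟩
    simp only [hEdef]
    rw [hoffd l d]
    have hd : l + d + 1 - l - 1 = d := by omega
    rw [hd]
  -- second moment of partial sums
  have hSn : ∀ n, ∫ ω, (∑ l ∈ Finset.range n, W l ω) ^ 2 ∂μ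
      = ∑ l ∈ Finset.range n, ∑ l' ∈ Finset.range n, E l l' := by
    intro n
    have h1 : (fun ω => (∑ l ∈ Finset.range n, W l ω) ^ 2)
        = fun ω => ∑ l ∈ Finset.range n, ∑ l' ∈ Finset.range n, W l ω * W l' ω := by
      funext ω
      rw [sq, Finset.sum_mul_sum]
    rw [h1, integral_finset_sum _ fun l _ =>
      integrable_finset_sum _ fun l' _ => hWWint l l']
    exact Finset.sum_congr rfl fun l _ =>
      integral_finset_sum _ fun l' _ => hWWint l l'
  have hA : Tendsto (fun n => ∫ ω, (∑ l ∈ Finset.range n, W l ω) ^ 2 ∂μ) atTop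
      (nhds (2 * a * c / ((1 - m1) * (1 - m2)) + q / (1 - m2))) := by
    simp only [hSn]
    exact aux_main_tendsto hm1abs hm2abs E hEdiag hEoff hEsymm
  -- a.e. summability
  have hWint1 : ∀ l, Integrable (W l) μ := fun l => (hWmem l).integrable one_le_two
  have haesum : ∀ᵐ ω ∂μ, Summable (fun l => W l ω) :=
    aux_ae_summable hWint1 (fun l => le_of_eq (habs l))
      ((summable_geometric_of_lt_one hb0 hblt).mul_left a)
  -- Lp theory
  haveI : Fact ((1 : ENNReal) ≤ 2) := ⟨one_le_two⟩
  set φ : ℕ → Lp ℝ 2 μ := fun l => (hWmem l).toLp (W l) with hφdef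
  have hφnormsq : ∀ l, ‖φ l‖ ^ 2 = m2 ^ l * q := by
    intro l
    rw [aux_norm_sq (φ l) ((hWmem l).coeFn_toLp)]
    rw [← (hdiag l).2]
    exact integral_congr_ae (by filter_upwards with ω; rw [sq])
  have hq0 : 0 ≤ q := integral_nonneg fun ω => sq_nonneg _
  have hφnorm : ∀ l, ‖φ l‖ = Real.sqrt q * Real.sqrt m2 ^ l := by
    intro l
    have h1 : ‖φ l‖ = Real.sqrt (‖φ l‖ ^ 2) := (Real.sqrt_sq (norm_nonneg _)).symm
    rw [h1, hφnormsq l, Real.sqrt_mul (pow_nonneg hm2nonneg l), mul_comm]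
    congr 1
    rw [← Real.sqrt_sq (pow_nonneg (Real.sqrt_nonneg m2) l)]
    congr 1
    rw [← pow_mul, mul_comm l 2, pow_mul, Real.sq_sqrt hm2nonneg]
  have hsm2 : Real.sqrt m2 < 1 := by
    have := Real.sqrt_lt_sqrt hm2nonneg hM2
    rwa [Real.sqrt_one] at this
  have hφsummable : Summable φ := by
    apply Summable.of_norm
    have : Summable (fun l => Real.sqrt q * Real.sqrt m2 ^ l) :=
      (summable_geometric_of_lt_one (Real.sqrt_nonneg m2) hsm2).mul_left _
    exact this.congr fun l => (hφnorm l).symm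
  set Φ : Lp ℝ 2 μ := ∑' l, φ l with hΦdef
  have htendΦ : Tendsto (fun n => ∑ l ∈ Finset.range n, φ l) atTop (nhds Φ) :=
    hφsummable.hasSum.tendsto_sum_nat
  have hΨae : ∀ n, (↑↑(∑ l ∈ Finset.range n, φ l) : Ω → ℝ) =ᵐ[μ]
      fun ω => ∑ l ∈ Finset.range n, W l ω := by
    intro n
    refine (aux_coeFn_sum φ n).trans ?_
    have h : ∀ l, (↑↑(φ l) : Ω → ℝ) =ᵐ[μ] W l := fun l => (hWmem l).coeFn_toLp
    have hall : ∀ᵐ ω ∂μ, ∀ l, (↑↑(φ l) : Ω → ℝ) ω = W l ω := ae_all_iff.mpr h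
    filter_upwards [hall] with ω hω
    exact Finset.sum_congr rfl fun l _ => hω l
  -- identify Φ with the pointwise series
  have hΦae : (↑↑Φ : Ω → ℝ) =ᵐ[μ] fun ω => ∑' l, W l ω := by
    have hIM := tendstoInMeasure_of_tendsto_Lp htendΦ
    obtain ⟨ns, hns, hae⟩ := hIM.exists_seq_tendsto_ae
    have hall : ∀ᵐ ω ∂μ, ∀ i : ℕ, (↑↑(∑ l ∈ Finset.range (ns i), φ l) : Ω → ℝ) ω
        = ∑ l ∈ Finset.range (ns i), W l ω := ae_all_iff.mpr fun i => hΨae (ns i)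
    filter_upwards [hae, hall, haesum] with ω h1 h2 h3
    have h4 : Tendsto (fun n => ∑ l ∈ Finset.range n, W l ω) atTop
        (nhds (∑' l, W l ω)) := h3.hasSum.tendsto_sum_nat
    have h5 : Tendsto (fun i => ∑ l ∈ Finset.range (ns i), W l ω) atTop
        (nhds (∑' l, W l ω)) := h4.comp hns.tendsto_atTop
    have h6 : Tendsto (fun i => ∑ l ∈ Finset.range (ns i), W l ω) atTop
        (nhds ((↑↑Φ : Ω → ℝ) ω)) := by
      refine Tendsto.congr (fun i => h2 i) h1
    exact tendsto_nhds_unique h6 h5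
  -- part 1
  have part1 : Tendsto (fun n => ∫ ω,
      ((∑ l ∈ Finset.range n, W l ω) - ∑' l, W l ω) ^ 2 ∂μ) atTop (nhds 0) := by
    have hnorm : Tendsto (fun n => ‖(∑ l ∈ Finset.range n, φ l) - Φ‖) atTop (nhds 0) :=
      tendsto_iff_norm_sub_tendsto_zero.mp htendΦ
    have hnorm2 : Tendsto (fun n => ‖(∑ l ∈ Finset.range n, φ l) - Φ‖ ^ 2) atTop (nhds 0) := by
      have := hnorm.pow 2
      simpa using this
    refine Tendsto.congr (fun n => ?_) hnorm2
    refine aux_norm_sq _ ?_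
    have h1 := Lp.coeFn_sub (∑ l ∈ Finset.range n, φ l) Φ
    filter_upwards [h1, hΨae n, hΦae] with ω e1 e2 e3
    rw [e1, Pi.sub_apply, e2, e3]
  have part2 : ∫ ω, (∑' l, W l ω) ^ 2 ∂μ
      = 2 * a * c / ((1 - m1) * (1 - m2)) + q / (1 - m2) := by
    have h1 : ∫ ω, (∑' l, W l ω) ^ 2 ∂μ = ‖Φ‖ ^ 2 := (aux_norm_sq Φ hΦae).symm
    have h2 : Tendsto (fun n => ‖∑ l ∈ Finset.range n, φ l‖ ^ 2) atTop (nhds (‖Φ‖ ^ 2)) :=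
      (htendΦ.norm).pow 2
    have h3 : (fun n => ‖∑ l ∈ Finset.range n, φ l‖ ^ 2)
        = fun n => ∫ ω, (∑ l ∈ Finset.range n, W l ω) ^ 2 ∂μ :=
      funext fun n => aux_norm_sq _ (hΨae n)
    rw [h3] at h2
    rw [h1]
    exact tendsto_nhds_unique h2 hA
  exact ⟨by simpa only [hWdef] using part1, by simpa only [hWdef] using part2⟩
end
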